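/- arXiv:math/0703626 — 7 statements merged into one kernel-verified Lean document; each statement's English description precedes it below -/
import Mathlib

section
/- Let $(a_{nk})_{n,k\in\mathbb{N}}$ be a double-indexed sequence of nonnegative reals such that for each fixed $k$, $\lim_{n\to\infty} a_{kn} = 0$. Then $\lim_{n\to\infty} a_{kn} = 0$ uniformly in $k$ (i.e., $\sup_k a_{kn} \to 0$) if and only if for every pair of strictly increasing sequences $(k_n)$ and $(p_n)$ of natural numbers, $\lim_{n\to\infty} a_{k_n p_n} = 0$. -/
open Filter Topology

theorem stmt0 (a : ℕ → ℕ → ℝ) (hpos : ∀ k n, 0 ≤ a k n)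
    (hk : ∀ k, Tendsto (fun n => a k n) atTop (𝓝 0)) :
    (∀ ε > 0, ∃ N, ∀ n ≥ N, ∀ k, a k n < ε) ↔
      (∀ k p : ℕ → ℕ, StrictMono k → StrictMono p →
        Tendsto (fun n => a (k n) (p n)) atTop (𝓝 0)) := by
  constructor
  · intro h k p hks hps
    rw [Metric.tendsto_atTop]
    intro ε hε
    obtain ⟨N, hN⟩ := h ε hε
    refine ⟨N, fun n hn => ?_⟩
    rw [Real.dist_eq, sub_zero, abs_of_nonneg (hpos _ _)]
    exact hN _ (le_trans hn hps.le_apply) _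
  · intro h
    by_contra hc
    push_neg at hc
    obtain ⟨ε, hε, hbad⟩ := hc
    have key : ∀ K N : ℕ, ∃ q : ℕ × ℕ, K < q.1 ∧ N < q.2 ∧ ε ≤ a q.1 q.2 := by
      intro K N
      have hfin : ∀ j : ℕ, ∃ M, ∀ n ≥ M, a j n < ε := by
        intro j
        obtain ⟨M, hM⟩ := Metric.tendsto_atTop.mp (hk j) ε hε
        exact ⟨M, fun n hn => by
          have := hM n hn; rwa [Real.dist_eq, sub_zero, abs_of_nonneg (hpos _ _)] at this⟩
      choose Mf hMf using hfin
      set B := (Finset.range (K + 1)).sup Mf ⊔ (N + 1) with hB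
      obtain ⟨n, hn, k, hk'⟩ := hbad B
      refine ⟨(k, n), ?_, ?_, hk'⟩
      · by_contra hle
        push_neg at hle
        have hmem : k ∈ Finset.range (K + 1) := Finset.mem_range.mpr (Nat.lt_succ_of_le hle)
        have : Mf k ≤ B := le_trans (Finset.le_sup hmem) le_sup_left
        exact absurd hk' (not_le.mpr (hMf k n (le_trans this hn)))
      · exact lt_of_lt_of_le (Nat.lt_succ_self N) (le_trans le_sup_right hn)
    let g : ℕ → ℕ × ℕ := fun i => Nat.rec (key 0 0).choose (fun _ q => (key q.1 q.2).choose) i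
    have hg : ∀ i, (g i).1 < (g (i + 1)).1 ∧ (g i).2 < (g (i + 1)).2 ∧
        ε ≤ a (g (i + 1)).1 (g (i + 1)).2 := by
      intro i
      exact (key (g i).1 (g i).2).choose_spec
    have hks : StrictMono (fun i => (g (i + 1)).1) :=
      strictMono_nat_of_lt_succ fun i => (hg (i + 1)).1
    have hps : StrictMono (fun i => (g (i + 1)).2) :=
      strictMono_nat_of_lt_succ fun i => (hg (i + 1)).2.1
    have ht := h _ _ hks hps
    have hle : ε ≤ 0 := by
      refine le_of_tendsto_of_tendsto tendsto_const_nhds ht ?_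
      exact Eventually.of_forall fun i => (hg i).2.2
    exact absurd hle (not_le.mpr hε)
end

section
/- Let $X$ be a Banach space, $(Y_n)_{n\in\mathbb{N}}$ a sequence of Banach spaces, and $U_n \in L(X, Y_n)$ bounded linear operators. If each $U_n$ is a Dunford–Pettis operator and for every sequence $(x_n)$ in $X$ with $x_n \to 0$ weakly we have $\|U_n(x_n)\| \to 0$, then the family $(U_n)$ is uniformly Dunford–Pettis: for every $x_n \to 0$ weakly, $\sup_k \|U_k(x_n)\| \to 0$. -/
open Filter Topology

theorem stmt1 {X : Type*} [NormedAddCommGroup X] [NormedSpace ℝ X] [CompleteSpace X]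
    {Y : ℕ → Type*} [∀ n, NormedAddCommGroup (Y n)] [∀ n, NormedSpace ℝ (Y n)]
    [∀ n, CompleteSpace (Y n)]
    (U : ∀ n, X →L[ℝ] Y n)
    (hDP : ∀ n, ∀ x : ℕ → X,
      (∀ φ : X →L[ℝ] ℝ, Tendsto (fun m => φ (x m)) atTop (𝓝 0)) →
      Tendsto (fun m => ‖U n (x m)‖) atTop (𝓝 0))
    (hdiag : ∀ x : ℕ → X,
      (∀ φ : X →L[ℝ] ℝ, Tendsto (fun m => φ (x m)) atTop (𝓝 0)) →
      Tendsto (fun m => ‖U m (x m)‖) atTop (𝓝 0)) :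
    ∀ x : ℕ → X, (∀ φ : X →L[ℝ] ℝ, Tendsto (fun m => φ (x m)) atTop (𝓝 0)) →
      ∀ ε > 0, ∃ N, ∀ m ≥ N, ∀ k, ‖U k (x m)‖ < ε := by
  classical
  intro x hx ε hε
  by_contra hcon
  push_neg at hcon
  choose m hm k hk using hcon
  have hmTop : Tendsto m atTop atTop := tendsto_atTop_mono hm tendsto_id
  have hxm : ∀ φ : X →L[ℝ] ℝ, Tendsto (fun N => φ (x (m N))) atTop (𝓝 0) :=
    fun φ => (hx φ).comp hmTop
  by_cases hfin : (Set.range k).Finite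
  · -- bounded case: some value of k occurs infinitely often
    haveI : Finite (Set.range k) := hfin.to_subtype
    obtain ⟨y, hy⟩ := Finite.exists_infinite_fiber
      (fun N => (⟨k N, Set.mem_range_self N⟩ : Set.range k))
    have hset : (fun N => (⟨k N, Set.mem_range_self N⟩ : Set.range k)) ⁻¹' {y}
        = {N | k N = y.1} := by
      ext N; simp [Subtype.ext_iff]
    have hinf : {N | k N = y.1}.Infinite := by
      rw [← hset]
      exact Set.infinite_coe_iff.mp hy
    have h1 := hDP y.1 (fun N => x (m N)) hxm
    rw [Metric.tendsto_atTop] at h1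
    obtain ⟨N0, hN0⟩ := h1 ε hε
    obtain ⟨N, hNmem, hNgt⟩ := hinf.exists_gt N0
    have hge := hk N
    rw [hNmem] at hge
    have hlt := hN0 N hNgt.le
    rw [Real.dist_eq, sub_zero, abs_of_nonneg (norm_nonneg _)] at hlt
    linarith
  · -- unbounded case
    have hstep : ∀ d c : ℕ, ∃ N, d < N ∧ c < k N := by
      intro d c
      by_contra hno
      push_neg at hno
      apply hfin
      have hsub : Set.range k ⊆ k '' Set.Iic d ∪ Set.Iic c := by
        rintro _ ⟨N, rfl⟩
        rcases le_or_gt N d with h | h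
        · exact Or.inl ⟨N, h, rfl⟩
        · exact Or.inr (hno N h)
      exact (((Set.finite_Iic d).image k).union (Set.finite_Iic c)).subset hsub
    let j : ℕ → ℕ := fun i => Nat.rec 0 (fun _ prev => (hstep prev (k prev)).choose) i
    have hj1 : ∀ i, j i < j (i + 1) := fun i => (hstep (j i) (k (j i))).choose_spec.1
    have hj2 : ∀ i, k (j i) < k (j (i + 1)) := fun i => (hstep (j i) (k (j i))).choose_spec.2
    have hjmono : StrictMono j := strictMono_nat_of_lt_succ hj1
    have hkjmono : StrictMono (fun i => k (j i)) := strictMono_nat_of_lt_succ hj2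
    set z : ℕ → X := fun n =>
      if h : ∃ i, k (j i) = n then x (m (j h.choose)) else 0 with hzdef
    have hz_eq : ∀ i, z (k (j i)) = x (m (j i)) := by
      intro i
      have hex : ∃ i', k (j i') = k (j i) := ⟨i, rfl⟩
      have heq : hex.choose = i := hkjmono.injective hex.choose_spec
      simp only [hzdef, dif_pos hex, heq]
    have hz_null : ∀ φ : X →L[ℝ] ℝ, Tendsto (fun n => φ (z n)) atTop (𝓝 0) := by
      intro φ
      rw [Metric.tendsto_atTop]
      intro δ hδ
      have h1 : Tendsto (fun i => φ (x (m (j i)))) atTop (𝓝 0) :=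
        (hx φ).comp (hmTop.comp hjmono.tendsto_atTop)
      rw [Metric.tendsto_atTop] at h1
      obtain ⟨I, hI⟩ := h1 δ hδ
      refine ⟨k (j I), fun n hn => ?_⟩
      by_cases hex : ∃ i, k (j i) = n
      · obtain ⟨i, hi⟩ := hex
        have hzi : z n = x (m (j i)) := by rw [← hi, hz_eq i]
        rw [hzi]
        apply hI
        have hle : k (j I) ≤ k (j i) := by rw [hi]; exact hn
        exact hkjmono.le_iff_le.mp hle
      · have hz0 : z n = 0 := dif_neg hex
        rw [hz0]
        simpa using hδ
    have hd := hdiag z hz_null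
    rw [Metric.tendsto_atTop] at hd
    obtain ⟨N0, hN0⟩ := hd ε hε
    have hlt := hN0 (k (j N0)) hkjmono.le_apply
    rw [hz_eq N0] at hlt
    have hge := hk (j N0)
    rw [Real.dist_eq, sub_zero, abs_of_nonneg (norm_nonneg _)] at hlt
    linarith
end

section
/- Let $X$ be a Banach space and $(x_n^*)$ a bounded sequence in $X^*$, and let $U : X \to \ell_\infty$ be the operator $U(x) = (x_n^*(x))_n$. Then $U$ is a Dunford–Pettis operator if and only if for every weakly null sequence $(x_n)$ in $X$, $x_n^*(x_n) \to 0$. -/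
open Filter Topology

theorem stmt4 {X : Type*} [NormedAddCommGroup X] [NormedSpace ℝ X] [CompleteSpace X]
    (x' : ℕ → X →L[ℝ] ℝ) (hb : ∃ C : ℝ, ∀ n, ‖x' n‖ ≤ C) :
    (∀ x : ℕ → X, (∀ φ : X →L[ℝ] ℝ, Tendsto (fun m => φ (x m)) atTop (𝓝 0)) →
        ∀ ε > 0, ∃ N, ∀ m ≥ N, ∀ n, |x' n (x m)| < ε) ↔
      (∀ x : ℕ → X, (∀ φ : X →L[ℝ] ℝ, Tendsto (fun m => φ (x m)) atTop (𝓝 0)) →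
        Tendsto (fun n => x' n (x n)) atTop (𝓝 0)) := by
  classical
  constructor
  · intro H x hx
    rw [Metric.tendsto_atTop]
    intro ε hε
    obtain ⟨N, hN⟩ := H x hx ε hε
    refine ⟨N, fun j hj => ?_⟩
    rw [Real.dist_eq, sub_zero]
    exact hN j hj j
  · intro H x hx ε hε
    by_contra hc
    push_neg at hc
    -- hc : ∀ N, ∃ m ≥ N, ∃ n, ε ≤ |x' n (x m)|
    have hA : ∀ K, ∃ m n, K ≤ m ∧ K ≤ n ∧ ε ≤ |x' n (x m)| := by
      intro K
      have hsmall : ∀ n, ∀ᶠ m in atTop, |x' n (x m)| < ε := by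
        intro n
        have h1 : Tendsto (fun m => |x' n (x m)|) atTop (𝓝 0) := by
          simpa using (hx (x' n)).abs
        exact h1.eventually_lt_const hε
      have hfin : ∀ᶠ m in atTop, ∀ n ∈ Finset.range K, |x' n (x m)| < ε :=
        (Filter.eventually_all_finset _).2 fun n _ => hsmall n
      obtain ⟨N₀, hN₀⟩ := eventually_atTop.1 hfin
      obtain ⟨m, hm, n, hn⟩ := hc (max N₀ K)
      refine ⟨m, n, le_trans (le_max_right _ _) hm, ?_, hn⟩
      by_contra hnK
      push_neg at hnK
      exact absurd (hN₀ m (le_trans (le_max_left _ _) hm) n (Finset.mem_range.2 hnK))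
        (not_lt.2 hn)
    choose F G hF hG hFG using hA
    set idx : ℕ → ℕ := fun k => Nat.rec 0 (fun _ K => max (F K) (G K) + 1) k with hidxdef
    have hidxsucc : ∀ k, idx (k + 1) = max (F (idx k)) (G (idx k)) + 1 := fun k => rfl
    have hidx : ∀ k, k ≤ idx k := by
      intro k
      induction k with
      | zero => exact Nat.zero_le _
      | succ k ih =>
        rw [hidxsucc]
        have : idx k ≤ F (idx k) := hF _
        omega
    set m : ℕ → ℕ := fun k => F (idx k) with hmdef
    set n : ℕ → ℕ := fun k => G (idx k) with hndef
    have hmono_n : StrictMono n := by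
      apply strictMono_nat_of_lt_succ
      intro k
      have h2 : idx (k + 1) ≤ n (k + 1) := hG _
      have h3 : n k < idx (k + 1) := by
        rw [hidxsucc]; exact Nat.lt_succ_of_le (le_max_right _ _)
      exact lt_of_lt_of_le h3 h2
    have hmk : ∀ k, k ≤ m k := fun k => le_trans (hidx k) (hF _)
    set z : ℕ → X := fun j => if h : ∃ k, n k = j then x (m h.choose) else 0 with hz
    have hzn : ∀ k, z (n k) = x (m k) := by
      intro k
      have h : ∃ k', n k' = n k := ⟨k, rfl⟩
      have hch : h.choose = k := hmono_n.injective h.choose_spec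
      simp only [hz, dif_pos h, hch]
    have hznull : ∀ φ : X →L[ℝ] ℝ, Tendsto (fun j => φ (z j)) atTop (𝓝 0) := by
      intro φ
      rw [Metric.tendsto_atTop]
      intro δ hδ
      obtain ⟨M, hM⟩ := Metric.tendsto_atTop.1 (hx φ) δ hδ
      refine ⟨n M, fun j hj => ?_⟩
      by_cases h : ∃ k, n k = j
      · obtain ⟨k, hk⟩ := h
        have hMk : M ≤ k := by
          have : n M ≤ n k := by rw [hk]; exact hj
          exact hmono_n.le_iff_le.1 this
        rw [← hk, hzn]
        exact hM (m k) (le_trans hMk (hmk k))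
      · simp only [hz, dif_neg h]
        simpa using hδ
    have hten := Metric.tendsto_atTop.1 (H z hznull) ε hε
    obtain ⟨J, hJ⟩ := hten
    have h1 := hJ (n J) (hmono_n.le_apply)
    rw [hzn, Real.dist_eq, sub_zero] at h1
    exact absurd h1 (not_lt.2 (hFG (idx J)))
end

section
/- Let $X$ be a Banach space, $(\varphi_n)$ a sequence of totally measurable $X^*$-valued functions on $[0,1]$ with $\sup_{n,t}\|\varphi_n(t)\|<\infty$, and $(\nu_n)$ regular Borel measures on $[0,1]$, uniformly countably additive and pointwise bounded, with $\varphi_n(t) \to 0$ weak* for each $t\in[0,1]$. Then for every Borel set $E \subseteq [0,1]$ and every $x \in X$, $\int_E \varphi_n(t)(x)\,d\nu_n(t) \to 0$. -/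
open Filter Topology MeasureTheory
open scoped ENNReal

/-- Integral of a real function against a finite signed measure, via the Jordan
decomposition. -/
noncomputable def sintegral {α : Type*} [MeasurableSpace α]
    (ν : MeasureTheory.SignedMeasure α) (f : α → ℝ) : ℝ :=
  (∫ t, f t ∂ν.toJordanDecomposition.posPart) - ∫ t, f t ∂ν.toJordanDecomposition.negPart

instance myTVFinite {α : Type*} [MeasurableSpace α] (s : SignedMeasure α) :
    IsFiniteMeasure s.totalVariation := by
  have : s.totalVariation
      = s.toJordanDecomposition.posPart + s.toJordanDecomposition.negPart := rfl
  rw [this]; infer_instance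

lemma myTVsingleton {α : Type*} [MeasurableSpace α] [MeasurableSingletonClass α]
    (s : SignedMeasure α) (t : α) :
    s.totalVariation {t} = ENNReal.ofReal |s {t}| := by
  obtain ⟨u, hum, h1, h2⟩ := s.toJordanDecomposition.mutuallySingular
  have hsval : s {t} = (s.toJordanDecomposition.posPart {t}).toReal
      - (s.toJordanDecomposition.negPart {t}).toReal := by
    conv_lhs => rw [← s.toSignedMeasure_toJordanDecomposition]
    rw [MeasureTheory.JordanDecomposition.toSignedMeasure,
      Measure.toSignedMeasure_sub_apply (measurableSet_singleton t)]
    rfl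
  have htv : s.totalVariation {t}
      = s.toJordanDecomposition.posPart {t} + s.toJordanDecomposition.negPart {t} := rfl
  by_cases htu : t ∈ u
  · have hp : s.toJordanDecomposition.posPart {t} = 0 :=
      le_antisymm (le_trans (measure_mono (Set.singleton_subset_iff.2 htu)) h1.le) (zero_le)
    rw [htv, hp, zero_add, hsval, hp]
    rw [ENNReal.toReal_zero, zero_sub, abs_neg,
      abs_of_nonneg ENNReal.toReal_nonneg, ENNReal.ofReal_toReal (measure_ne_top _ _)]
  · have hn : s.toJordanDecomposition.negPart {t} = 0 :=
      le_antisymm (le_trans (measure_mono (Set.singleton_subset_iff.2 htu)) h2.le) (zero_le)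
    rw [htv, hn, add_zero, hsval, hn]
    rw [ENNReal.toReal_zero, sub_zero,
      abs_of_nonneg ENNReal.toReal_nonneg, ENNReal.ofReal_toReal (measure_ne_top _ _)]

lemma mySintegralBound {α : Type*} [MeasurableSpace α] (s : SignedMeasure α) (f : α → ℝ)
    (hfin : ∫⁻ t, ‖f t‖₊ ∂s.totalVariation ≠ ∞) :
    |sintegral s f| ≤ (∫⁻ t, ‖f t‖₊ ∂s.totalVariation).toReal := by
  have htv : (∫⁻ t, (‖f t‖₊ : ℝ≥0∞) ∂s.totalVariation)
      = (∫⁻ t, ‖f t‖₊ ∂s.toJordanDecomposition.posPart)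
        + ∫⁻ t, ‖f t‖₊ ∂s.toJordanDecomposition.negPart := by
    have : s.totalVariation
        = s.toJordanDecomposition.posPart + s.toJordanDecomposition.negPart := rfl
    rw [this, lintegral_add_measure]
  rw [htv] at hfin ⊢
  have hp : (∫⁻ t, (‖f t‖₊ : ℝ≥0∞) ∂s.toJordanDecomposition.posPart) ≠ ∞ :=
    fun h => hfin (by rw [h, top_add])
  have hn : (∫⁻ t, (‖f t‖₊ : ℝ≥0∞) ∂s.toJordanDecomposition.negPart) ≠ ∞ :=
    fun h => hfin (by rw [h, add_top])
  rw [ENNReal.toReal_add hp hn]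
  have b1 := norm_integral_le_lintegral_norm (μ := s.toJordanDecomposition.posPart) f
  have b2 := norm_integral_le_lintegral_norm (μ := s.toJordanDecomposition.negPart) f
  simp_rw [ofReal_norm] at b1 b2
  calc |sintegral s f| ≤ ‖∫ t, f t ∂s.toJordanDecomposition.posPart‖
        + ‖∫ t, f t ∂s.toJordanDecomposition.negPart‖ := by
        rw [sintegral]; exact abs_sub _ _
    _ ≤ _ := add_le_add b1 b2

lemma myUnifAC {α : Type*} [MeasurableSpace α] (τ : ℕ → Measure α) (μ : Measure α)
    (hac : ∀ n (B : Set α), MeasurableSet B → μ B = 0 → τ n B = 0)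
    (hUCA : ∀ E : ℕ → Set α, (∀ k, MeasurableSet (E k)) → Antitone E → (⋂ k, E k) = ∅ →
      Tendsto (fun k => ⨆ n, τ n (E k)) atTop (𝓝 0))
    {ε : ℝ≥0∞} (hε : 0 < ε) :
    ∃ δ : ℝ≥0∞, 0 < δ ∧ ∀ B : Set α, MeasurableSet B → μ B < δ → ∀ n, τ n B ≤ ε := by
  by_contra h
  push_neg at h
  have hpow : ∀ k : ℕ, (0:ℝ≥0∞) < 2⁻¹ ^ k := by
    intro k
    exact ENNReal.pow_pos (ENNReal.inv_pos.2 (by norm_num)) k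
  choose A hAm hAμ m hm using fun k : ℕ => h (2⁻¹ ^ k) (hpow k)
  set B : ℕ → Set α := fun k => ⋃ j, A (j + k) with hB
  have hBm : ∀ k, MeasurableSet (B k) := fun k => MeasurableSet.iUnion fun j => hAm _
  have hBanti : Antitone B := by
    intro k k' hkk' u hu
    obtain ⟨j, hj⟩ := Set.mem_iUnion.1 hu
    refine Set.mem_iUnion.2 ⟨j + (k' - k), ?_⟩
    have : j + (k' - k) + k = j + k' := by omega
    rw [this]; exact hj
  have hBμ : ∀ k, μ (B k) ≤ 2 * 2⁻¹ ^ k := by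
    intro k
    calc μ (B k) ≤ ∑' j : ℕ, μ (A (j + k)) := measure_iUnion_le _
      _ ≤ ∑' j : ℕ, 2⁻¹ ^ (j + k) := ENNReal.tsum_le_tsum fun j => (hAμ _).le
      _ = (∑' j : ℕ, 2⁻¹ ^ j) * 2⁻¹ ^ k := by
          simp_rw [pow_add]; rw [ENNReal.tsum_mul_right]
      _ = 2 * 2⁻¹ ^ k := by
          rw [ENNReal.tsum_geometric, ENNReal.one_sub_inv_two, inv_inv]
  set N : Set α := ⋂ k, B k with hN
  have hNm : MeasurableSet N := MeasurableSet.iInter hBm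
  have hNμ : μ N = 0 := by
    have htends : Tendsto (fun k : ℕ => (2:ℝ≥0∞) * 2⁻¹ ^ k) atTop (𝓝 0) := by
      have := ENNReal.tendsto_pow_atTop_nhds_zero_of_lt_one
        (r := 2⁻¹) (by simp [ENNReal.inv_lt_one])
      simpa using ENNReal.Tendsto.const_mul this (by norm_num)
    have hle : ∀ k, μ N ≤ 2 * 2⁻¹ ^ k := fun k =>
      le_trans (measure_mono (Set.iInter_subset _ k)) (hBμ k)
    exact le_antisymm (ge_of_tendsto' htends hle) (zero_le)
  set E : ℕ → Set α := fun k => B k \ N with hE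
  have hEm : ∀ k, MeasurableSet (E k) := fun k => (hBm k).diff hNm
  have hEanti : Antitone E := fun k k' hkk' => Set.diff_subset_diff_left (hBanti hkk')
  have hEempty : (⋂ k, E k) = ∅ := by
    refine Set.eq_empty_iff_forall_notMem.2 fun u hu => ?_
    have hall := Set.mem_iInter.1 hu
    exact (hall 0).2 (Set.mem_iInter.2 fun k => (hall k).1)
  have T := hUCA E hEm hEanti hEempty
  rw [ENNReal.tendsto_nhds_zero] at T
  obtain ⟨k, hk⟩ := (T ε hε).exists
  have h1 : ε < τ (m k) (E k) := by
    refine lt_of_lt_of_le (hm k) ?_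
    have hsub : A k ⊆ B k := by
      intro u hu; exact Set.mem_iUnion.2 ⟨0, by simpa using hu⟩
    calc τ (m k) (A k) ≤ τ (m k) (B k) := measure_mono hsub
      _ ≤ τ (m k) (E k ∪ N) := measure_mono (by
          intro u hu
          by_cases hn : u ∈ N
          · exact Or.inr hn
          · exact Or.inl ⟨hu, hn⟩)
      _ ≤ τ (m k) (E k) + τ (m k) N := measure_union_le _ _
      _ = τ (m k) (E k) := by rw [hac _ N hNm hNμ, add_zero]
  exact absurd (le_trans (le_iSup (fun n => τ n (E k)) (m k)) hk) (not_le.2 h1)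

lemma mySmallIntervals (ρ : Measure (Set.Icc (0:ℝ) 1)) [IsFiniteMeasure ρ]
    (hna : ∀ t, ρ {t} = 0) {δ : ℝ≥0∞} (hδ : 0 < δ) :
    ∃ η : ℝ, 0 < η ∧ ∀ a : ℝ,
      ρ {t : Set.Icc (0:ℝ) 1 | (t:ℝ) ∈ Set.Icc a (a + η)} < δ := by
  by_contra h
  push_neg at h
  have hpos : ∀ k : ℕ, (0:ℝ) < 1/(k+1) := fun k => by positivity
  choose a ha using fun k : ℕ => h (1/(k+1)) (hpos k)
  have hne : ∀ k, ({t : Set.Icc (0:ℝ) 1 |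
      (t:ℝ) ∈ Set.Icc (a k) (a k + 1/(k+1))}).Nonempty := by
    intro k
    rw [Set.nonempty_iff_ne_empty]
    intro hem
    have := ha k
    rw [hem] at this
    exact absurd (le_antisymm (le_of_le_of_eq this measure_empty) (zero_le)) hδ.ne'
  have habdd : ∀ k, a k ∈ Set.Icc (-1:ℝ) 1 := by
    intro k
    obtain ⟨t, ht⟩ := hne k
    have h1 : a k ≤ (t:ℝ) := ht.1
    have h2 : (t:ℝ) ≤ a k + 1/(k+1) := ht.2
    have h3 : (0:ℝ) ≤ (t:ℝ) := t.2.1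
    have h4 : (t:ℝ) ≤ 1 := t.2.2
    have h5 : 1/((k:ℝ)+1) ≤ 1 := by
      rw [div_le_one (by positivity)]; norm_num
    constructor <;> linarith
  obtain ⟨t₀, -, ψ, hψ, hlim⟩ := tendsto_subseq_of_bounded
    (Metric.isBounded_Icc (-1:ℝ) 1) habdd
  set C : ℕ → Set (Set.Icc (0:ℝ) 1) :=
    fun m => {t | (t:ℝ) ∈ Set.Icc (t₀ - 1/(m+1)) (t₀ + 1/(m+1))} with hC
  have hCm : ∀ m, MeasurableSet (C m) :=
    fun m => measurable_subtype_coe measurableSet_Icc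
  have hCδ : ∀ m, δ ≤ ρ (C m) := by
    intro m
    have h2m : (0:ℝ) < 1/(2*(m+1)) := by positivity
    have hev1 := (Metric.tendsto_nhds.1 hlim) _ h2m
    have hψtop : Tendsto (fun j => (ψ j : ℝ) + 1) atTop atTop :=
      tendsto_atTop_add_const_right _ 1
        ((tendsto_natCast_atTop_atTop).comp hψ.tendsto_atTop)
    have hev2 : ∀ᶠ j in atTop, 1/((ψ j:ℝ)+1) < 1/(2*(m+1)) := by
      have h' := hψtop.inv_tendsto_atTop
      rw [Metric.tendsto_nhds] at h'
      filter_upwards [h' _ h2m] with j hj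
      have h0 : (0:ℝ) < (ψ j:ℝ)+1 := by positivity
      simp only [Pi.inv_apply, Real.dist_eq, sub_zero] at hj
      rw [abs_of_pos (inv_pos.2 h0)] at hj
      rw [one_div]
      exact hj
    obtain ⟨j, hj1, hj2⟩ := (hev1.and hev2).exists
    have hsum : 1/(2*((m:ℝ)+1)) + 1/(2*((m:ℝ)+1)) = 1/((m:ℝ)+1) := by
      rw [← add_div, div_eq_div_iff (by positivity) (by positivity)]
      ring
    refine le_trans (ha (ψ j)) (measure_mono ?_)
    intro t ht
    have h1 : a (ψ j) ≤ (t:ℝ) := ht.1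
    have h2 : (t:ℝ) ≤ a (ψ j) + 1/((ψ j:ℝ)+1) := ht.2
    have h3' := abs_lt.1 (by rw [Real.dist_eq] at hj1; exact hj1 :
      |a (ψ j) - t₀| < 1/(2*((m:ℝ)+1)))
    show (t:ℝ) ∈ Set.Icc (t₀ - 1/(m+1)) (t₀ + 1/(m+1))
    exact ⟨by linarith [h3'.1], by linarith [h3'.2, hj2]⟩
  have hanti : Antitone C := by
    intro m m' hmm' t ht
    have h1 : 1/((m':ℝ)+1) ≤ 1/((m:ℝ)+1) := by
      apply one_div_le_one_div_of_le (by positivity)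
      exact_mod_cast add_le_add_left (Nat.cast_le.2 hmm') 1
    have h2 := ht.1; have h3 := ht.2
    exact ⟨by linarith, by linarith⟩
  have hT := tendsto_measure_iInter_atTop
    (fun m => (hCm m).nullMeasurableSet) hanti ⟨0, measure_ne_top ρ _⟩
  have hInter : ρ (⋂ m, C m) = 0 := by
    set S := ⋂ m, C m with hS
    have hsub : ∀ t ∈ S, (t:ℝ) = t₀ := by
      intro t ht
      have hall : ∀ m : ℕ, |(t:ℝ) - t₀| ≤ 1/(m+1) := by
        intro m
        have := Set.mem_iInter.1 ht m
        have h1 := this.1; have h2 := this.2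
        rw [abs_le]; constructor <;> linarith
      by_contra hne'
      have habs : 0 < |(t:ℝ) - t₀| := abs_pos.2 (sub_ne_zero.2 hne')
      obtain ⟨m, hm⟩ := exists_nat_one_div_lt habs
      exact absurd (hall m) (not_le.2 hm)
    rcases Set.eq_empty_or_nonempty S with hS0 | ⟨t, ht⟩
    · rw [hS0]; exact measure_empty
    · have : S ⊆ {t} := by
        intro t' ht'
        have : (t':ℝ) = (t:ℝ) := by rw [hsub t' ht', hsub t ht]
        exact Subtype.ext this
      exact le_antisymm (le_trans (measure_mono this) (hna t).le) (zero_le)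
  rw [hInter] at hT
  have := ge_of_tendsto' hT (fun m => hCδ m)
  exact absurd this (not_le.2 hδ)

theorem stmt7 {X : Type*} [NormedAddCommGroup X] [NormedSpace ℝ X] [CompleteSpace X]
    (φ : ℕ → (Set.Icc (0:ℝ) 1) → (X →L[ℝ] ℝ))
    (hmeas : ∀ n, StronglyMeasurable (φ n))
    (M : ℝ) (hM : ∀ n t, ‖φ n t‖ ≤ M)
    (ν : ℕ → MeasureTheory.SignedMeasure (Set.Icc (0:ℝ) 1))
    (hUCA : ∀ E : ℕ → Set (Set.Icc (0:ℝ) 1), (∀ k, MeasurableSet (E k)) →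
      Antitone E → (⋂ k, E k) = ∅ →
      Tendsto (fun k => ⨆ n, (ν n).totalVariation (E k)) atTop (𝓝 0))
    (hptbdd : ∀ E : Set (Set.Icc (0:ℝ) 1), MeasurableSet E → ∃ C : ℝ, ∀ n, |ν n E| ≤ C)
    (hweakstar : ∀ t, ∀ x : X, Tendsto (fun n => φ n t x) atTop (𝓝 0)) :
    ∀ E : Set (Set.Icc (0:ℝ) 1), MeasurableSet E → ∀ x : X,
      Tendsto (fun n => sintegral (ν n) (E.indicator (fun t => φ n t x)))
        atTop (𝓝 0) := by
  intro E hE x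
  set g : ℕ → Set.Icc (0:ℝ) 1 → ℝ := fun n => E.indicator (fun t => φ n t x) with hgdef
  set τ : ℕ → Measure (Set.Icc (0:ℝ) 1) := fun n => (ν n).totalVariation with hτdef
  set L : ℕ → ℝ≥0∞ := fun n => ∫⁻ t, ‖g n t‖₊ ∂(τ n) with hLdef
  -- strong measurability of g n
  have hgm : ∀ n, StronglyMeasurable (g n) := by
    intro n
    exact ((ContinuousLinearMap.apply ℝ ℝ x).continuous.comp_stronglyMeasurable
      (hmeas n)).indicator hE
  -- pointwise convergence to 0
  have hg0 : ∀ t, Tendsto (fun n => g n t) atTop (𝓝 0) := by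
    intro t
    by_cases ht : t ∈ E
    · simpa [hgdef, Set.indicator_of_mem ht] using hweakstar t x
    · simpa [hgdef, Set.indicator_of_notMem ht] using tendsto_const_nhds
  -- uniform bound
  set M'' : ℝ≥0∞ := ENNReal.ofReal (M * ‖x‖) with hM''def
  have hM''ne : M'' ≠ ∞ := ENNReal.ofReal_ne_top
  have hgb : ∀ n t, (‖g n t‖₊ : ℝ≥0∞) ≤ M'' := by
    intro n t
    have h1 : ‖g n t‖ ≤ M * ‖x‖ := by
      refine le_trans (norm_indicator_le_norm_self _ t) ?_
      exact le_trans ((φ n t).le_opNorm x)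
        (mul_le_mul_of_nonneg_right (hM n t) (norm_nonneg x))
    change ‖g n t‖ₑ ≤ M''; rw [← ofReal_norm]
    exact ENNReal.ofReal_le_ofReal h1
  -- main claim
  have main : Tendsto L atTop (𝓝 0) := by
    rw [ENNReal.tendsto_nhds_zero]
    intro ε hε
    -- control measure
    set c : ℕ → ℝ≥0∞ := fun n => ((2:ℝ≥0∞)^n * (τ n Set.univ + 1))⁻¹ with hcdef
    have hcne0 : ∀ n, c n ≠ 0 := by
      intro n
      exact ENNReal.inv_ne_zero.2 (ENNReal.mul_ne_top
        (ENNReal.pow_ne_top ENNReal.ofNat_ne_top)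
        (ENNReal.add_ne_top.2 ⟨measure_ne_top _ _, ENNReal.one_ne_top⟩))
    set μ : Measure (Set.Icc (0:ℝ) 1) := Measure.sum (fun n => c n • τ n) with hμdef
    have hμbd : ∀ n, c n * τ n Set.univ ≤ 2⁻¹ ^ n := by
      intro n
      show ((2:ℝ≥0∞)^n * (τ n Set.univ + 1))⁻¹ * τ n Set.univ ≤ 2⁻¹ ^ n
      rw [ENNReal.mul_inv (Or.inl (pow_ne_zero n two_ne_zero))
        (Or.inl (ENNReal.pow_ne_top ENNReal.ofNat_ne_top)), ENNReal.inv_pow, mul_assoc]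
      calc (2:ℝ≥0∞)⁻¹^n * ((τ n Set.univ + 1)⁻¹ * τ n Set.univ)
          ≤ 2⁻¹^n * 1 := by
            refine mul_le_mul_right ?_ _
            calc (τ n Set.univ + 1)⁻¹ * τ n Set.univ
                ≤ (τ n Set.univ + 1)⁻¹ * (τ n Set.univ + 1) :=
                  mul_le_mul_right le_self_add _
              _ = 1 := ENNReal.inv_mul_cancel (by simp)
                  (ENNReal.add_ne_top.2 ⟨measure_ne_top _ _, ENNReal.one_ne_top⟩)
        _ = 2⁻¹^n := mul_one _
    haveI hμfin : IsFiniteMeasure μ := by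
      constructor
      rw [hμdef, Measure.sum_apply _ MeasurableSet.univ]
      calc ∑' n, (c n • τ n) Set.univ = ∑' n, c n * τ n Set.univ := by
            simp [Measure.smul_apply, smul_eq_mul]
        _ ≤ ∑' n, (2:ℝ≥0∞)⁻¹ ^ n := ENNReal.tsum_le_tsum hμbd
        _ = 2 := by rw [ENNReal.tsum_geometric, ENNReal.one_sub_inv_two, inv_inv]
        _ < ∞ := by norm_num
    have hμ0 : ∀ n (B : Set (Set.Icc (0:ℝ) 1)), MeasurableSet B → μ B = 0 → τ n B = 0 := by
      intro n B hB h0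
      rw [hμdef, Measure.sum_apply _ hB] at h0
      have := ENNReal.tsum_eq_zero.1 h0 n
      rw [Measure.smul_apply, smul_eq_mul] at this
      rcases mul_eq_zero.1 this with h | h
      · exact absurd h (hcne0 n)
      · exact h
    -- budget ε₂
    set ε₂ : ℝ≥0∞ := min ((ε/4)/(M''+1)) 1 with hε₂def
    have hε4 : (0:ℝ≥0∞) < ε/4 := ENNReal.div_pos hε.ne' (by norm_num)
    have hε₂pos : 0 < ε₂ := by
      refine lt_min ?_ one_pos
      exact ENNReal.div_pos hε4.ne' (ENNReal.add_ne_top.2 ⟨hM''ne, ENNReal.one_ne_top⟩)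
    have hMε₂ : M'' * ε₂ ≤ ε/4 := by
      calc M'' * ε₂ ≤ (M''+1) * ((ε/4)/(M''+1)) :=
            mul_le_mul' le_self_add (min_le_left _ _)
        _ ≤ ε/4 := ENNReal.mul_div_le
    -- uniform absolute continuity
    obtain ⟨δ, hδpos, hAC⟩ := myUnifAC τ μ hμ0 hUCA hε₂pos
    -- atoms
    set D : Set (Set.Icc (0:ℝ) 1) := {t | μ {t} ≠ 0} with hDdef
    have hDcount : D.Countable := by
      have h := Measure.countable_meas_pos_of_disjoint_of_meas_iUnion_ne_top
        (μ := μ) (As := fun t : Set.Icc (0:ℝ) 1 => {t})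
        (fun t => measurableSet_singleton t)
        (fun t t' htt' => by simp [Function.onFun, Set.disjoint_singleton, htt'])
        (measure_ne_top _ _)
      have heq : D = {t : Set.Icc (0:ℝ) 1 | 0 < μ {t}} := by
        ext t; simp [hDdef, pos_iff_ne_zero]
      rw [heq]; exact h
    have hDmeas : MeasurableSet D := hDcount.measurableSet
    -- finite subset F of D with small remainder
    have hF : ∃ F : Set (Set.Icc (0:ℝ) 1), F.Finite ∧ F ⊆ D ∧ μ (D \ F) < δ := by
      rcases Set.eq_empty_or_nonempty D with hD0 | hDne
      · exact ⟨∅, Set.finite_empty, Set.empty_subset _, by simp [hD0, hδpos]⟩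
      · obtain ⟨f, hf⟩ := Set.Countable.exists_eq_range hDcount hDne
        set R : ℕ → Set (Set.Icc (0:ℝ) 1) := fun k => D \ (f '' Set.Iio k) with hRdef
        have hRm : ∀ k, MeasurableSet (R k) :=
          fun k => hDmeas.diff ((Set.finite_Iio k).image f).measurableSet
        have hRanti : Antitone R := fun k k' hkk' =>
          Set.diff_subset_diff_right (Set.image_mono (Set.Iio_subset_Iio hkk'))
        have hRempty : (⋂ k, R k) = ∅ := by
          refine Set.eq_empty_iff_forall_notMem.2 fun t ht => ?_
          have h1 := Set.mem_iInter.1 ht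
          have h2 : t ∈ D := (h1 0).1
          rw [hf] at h2
          obtain ⟨k, hk⟩ := h2
          exact (h1 (k+1)).2 ⟨k, by simp, hk⟩
        have hT := tendsto_measure_iInter_atTop
          (fun k => (hRm k).nullMeasurableSet) hRanti ⟨0, measure_ne_top μ _⟩
        rw [hRempty] at hT
        simp only [measure_empty] at hT
        obtain ⟨k, hk⟩ := (hT.eventually_lt_const hδpos).exists
        exact ⟨f '' Set.Iio k, (Set.finite_Iio k).image f,
          by rw [hf]; exact Set.image_subset_range f _, hk⟩
    obtain ⟨F, hFfin, hFD, hFμ⟩ := hF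
    have hFmeas : MeasurableSet F := hFfin.measurableSet
    -- nonatomic part and interval pieces
    set ρ : Measure (Set.Icc (0:ℝ) 1) := μ.restrict Dᶜ with hρdef
    have hρna : ∀ t, ρ {t} = 0 := by
      intro t
      rw [hρdef, Measure.restrict_apply (measurableSet_singleton t)]
      by_cases ht : t ∈ D
      · have : {t} ∩ Dᶜ = ∅ := by
          ext t'; simp only [Set.mem_inter_iff, Set.mem_singleton_iff, Set.mem_compl_iff,
            Set.mem_empty_iff_false, iff_false, not_and]
          rintro rfl; simp [ht]
        rw [this, measure_empty]
      · have : {t} ∩ Dᶜ = {t} := by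
          ext t'; simp only [Set.mem_inter_iff, Set.mem_singleton_iff, Set.mem_compl_iff]
          constructor
          · exact fun h => h.1
          · rintro rfl; exact ⟨rfl, ht⟩
        rw [this]
        simpa [hDdef] using ht
    obtain ⟨η, hηpos, hsmall⟩ := mySmallIntervals ρ hρna hδpos
    set S : ℕ → Set (Set.Icc (0:ℝ) 1) :=
      fun i => {t | (t:ℝ) ∈ Set.Ico (i*η) (i*η+η)} with hSdef
    have hSmeas : ∀ i, MeasurableSet (S i) :=
      fun i => measurable_subtype_coe measurableSet_Ico
    set N₀ : ℕ := ⌈1/η⌉₊ + 1 with hN₀def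
    have hScover : ∀ t : Set.Icc (0:ℝ) 1, ∃ i, i < N₀ ∧ t ∈ S i := by
      intro t
      have ht0 : (0:ℝ) ≤ (t:ℝ) := t.2.1
      have ht1 : (t:ℝ) ≤ 1 := t.2.2
      refine ⟨⌊(t:ℝ)/η⌋₊, ?_, ?_, ?_⟩
      · have h1 : (t:ℝ)/η ≤ 1/η := by gcongr
        calc ⌊(t:ℝ)/η⌋₊ ≤ ⌊1/η⌋₊ := Nat.floor_mono h1
          _ ≤ ⌈1/η⌉₊ := Nat.floor_le_ceil _
          _ < N₀ := by omega
      · have := Nat.floor_le (div_nonneg ht0 hηpos.le)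
        calc (⌊(t:ℝ)/η⌋₊ : ℝ) * η ≤ ((t:ℝ)/η) * η := by
              exact mul_le_mul_of_nonneg_right this hηpos.le
          _ = (t:ℝ) := div_mul_cancel₀ _ hηpos.ne'
      · have := Nat.lt_floor_add_one ((t:ℝ)/η)
        have h2 : (t:ℝ) < (⌊(t:ℝ)/η⌋₊ + 1) * η := by
          rw [← div_lt_iff₀ hηpos]
          exact this
        calc (t:ℝ) < (⌊(t:ℝ)/η⌋₊ + 1) * η := h2
          _ = ⌊(t:ℝ)/η⌋₊ * η + η := by ring
    have hSempty : ∀ i, N₀ ≤ i → S i = ∅ := by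
      intro i hi
      refine Set.eq_empty_iff_forall_notMem.2 fun t ht => ?_
      have h1 : (i:ℝ)*η ≤ (t:ℝ) := ht.1
      have ht1 : (t:ℝ) ≤ 1 := t.2.2
      have hN : (1:ℝ)/η < N₀ := by
        rw [hN₀def]
        push_cast
        calc (1:ℝ)/η ≤ ⌈1/η⌉₊ := Nat.le_ceil _
          _ < ⌈1/η⌉₊ + 1 := by linarith
      have hiN : (N₀:ℝ) ≤ i := Nat.cast_le.2 hi
      have : (1:ℝ) < i * η := by
        rw [div_lt_iff₀ hηpos] at hN
        calc (1:ℝ) < N₀ * η := hN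
          _ ≤ i * η := mul_le_mul_of_nonneg_right hiN hηpos.le
      linarith
    have hμS : ∀ i, μ (S i ∩ Dᶜ) < δ := by
      intro i
      have h1 : μ (S i ∩ Dᶜ) = ρ (S i) :=
        (Measure.restrict_apply (hSmeas i)).symm
      rw [h1]
      refine lt_of_le_of_lt (measure_mono ?_) (hsmall ((i:ℝ)*η))
      intro t ht
      exact ⟨ht.1, le_of_lt ht.2⟩
    -- Egorov
    have hδr : ∃ r : ℝ, 0 < r ∧ ENNReal.ofReal r < δ := by
      obtain ⟨b, hb0, hbδ⟩ := exists_between hδpos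
      have hbne : b ≠ ∞ := by
        intro hb
        rw [hb] at hbδ
        exact absurd hbδ (not_lt.2 le_top)
      exact ⟨b.toReal, ENNReal.toReal_pos hb0.ne' hbne,
        by rwa [ENNReal.ofReal_toReal hbne]⟩
    obtain ⟨r, hr0, hrδ⟩ := hδr
    obtain ⟨texc, htexcm, htexcμ, hunif⟩ :=
      tendstoUniformlyOn_of_ae_tendsto' (μ := μ) hgm stronglyMeasurable_const
        (Eventually.of_forall hg0) hr0
    -- budget θ
    set θ : ℝ≥0∞ := min ((ε/4)/((N₀:ℝ≥0∞)*ε₂+1)) 1 with hθdef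
    have hθpos : 0 < θ := by
      refine lt_min ?_ one_pos
      refine ENNReal.div_pos hε4.ne' ?_
      refine ENNReal.add_ne_top.2 ⟨ENNReal.mul_ne_top (ENNReal.natCast_ne_top N₀) ?_,
        ENNReal.one_ne_top⟩
      exact (lt_of_le_of_lt (min_le_right _ _) ENNReal.one_lt_top).ne
    have hθne : θ ≠ ∞ := (lt_of_le_of_lt (min_le_right _ _) ENNReal.one_lt_top).ne
    have hθbound : (N₀:ℝ≥0∞) * (θ * ε₂) ≤ ε/4 := by
      calc (N₀:ℝ≥0∞) * (θ * ε₂) = ((N₀:ℝ≥0∞) * ε₂) * θ := by ring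
        _ ≤ ((N₀:ℝ≥0∞)*ε₂+1) * ((ε/4)/((N₀:ℝ≥0∞)*ε₂+1)) :=
            mul_le_mul' le_self_add (min_le_left _ _)
        _ ≤ ε/4 := ENNReal.mul_div_le
    set εr : ℝ := θ.toReal with hεrdef
    have hεrpos : 0 < εr := ENNReal.toReal_pos hθpos.ne' hθne
    have hεrθ : ENNReal.ofReal εr = θ := ENNReal.ofReal_toReal hθne
    rw [Metric.tendstoUniformlyOn_iff] at hunif
    have hev3 : ∀ᶠ n in atTop, ∀ t ∈ texcᶜ, (‖g n t‖₊ : ℝ≥0∞) ≤ θ := by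
      filter_upwards [hunif εr hεrpos] with n hn t ht
      have := hn t ht
      rw [dist_zero_left] at this
      change ‖g n t‖ₑ ≤ θ; rw [← ofReal_norm, ← hεrθ]
      exact (ENNReal.ofReal_le_ofReal this.le)
    -- atom sum
    choose C hC using fun t : Set.Icc (0:ℝ) 1 => hptbdd {t} (measurableSet_singleton t)
    have hτsing : ∀ n t, τ n {t} ≤ ENNReal.ofReal (C t) := by
      intro n t
      rw [hτdef, myTVsingleton]
      exact ENNReal.ofReal_le_ofReal (hC t n)
    have hatoms : Tendsto
        (fun n => ∑ t ∈ hFfin.toFinset, (‖g n t‖₊ : ℝ≥0∞) * τ n {t}) atTop (𝓝 0) := by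
      rw [show (0:ℝ≥0∞) = ∑ t ∈ hFfin.toFinset, 0 by simp]
      refine tendsto_finset_sum _ fun t _ => ?_
      have h1 : Tendsto (fun n => (‖g n t‖₊ : ℝ≥0∞)) atTop (𝓝 0) := by
        have := (ENNReal.continuous_coe.comp continuous_nnnorm).tendsto (0:ℝ)
        have h2 := this.comp (hg0 t)
        simpa [Function.comp_def] using h2
      refine tendsto_of_tendsto_of_tendsto_of_le_of_le tendsto_const_nhds
        ?_ (fun n => zero_le)
        (fun n => mul_le_mul_right (hτsing n t) _)
      have h3 : Tendsto (fun n => (‖g n t‖₊ : ℝ≥0∞) * ENNReal.ofReal (C t)) atTop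
          (𝓝 (0 * ENNReal.ofReal (C t))) :=
        ENNReal.Tendsto.mul_const h1 (Or.inr ENNReal.ofReal_ne_top)
      simpa using h3
    have hatomsev : ∀ᶠ n in atTop,
        (∑ t ∈ hFfin.toFinset, (‖g n t‖₊ : ℝ≥0∞) * τ n {t}) ≤ ε/4 :=
      ENNReal.tendsto_nhds_zero.1 hatoms _ hε4
    -- final assembly
    filter_upwards [hev3, hatomsev] with n hn3 hnatom
    have hcov : (Set.univ : Set (Set.Icc (0:ℝ) 1)) ⊆
        texc ∪ ((D \ F) ∪ (F ∪ ⋃ i, (texcᶜ ∩ Dᶜ ∩ S i))) := by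
      intro t _
      by_cases h1 : t ∈ texc
      · exact Or.inl h1
      · refine Or.inr ?_
        by_cases h2 : t ∈ D
        · by_cases h3 : t ∈ F
          · exact Or.inr (Or.inl h3)
          · exact Or.inl ⟨h2, h3⟩
        · obtain ⟨i, hiN, hiS⟩ := hScover t
          exact Or.inr (Or.inr (Set.mem_iUnion.2 ⟨i, ⟨⟨h1, h2⟩, hiS⟩⟩))
    have hb1 : ∫⁻ t in texc, (‖g n t‖₊ : ℝ≥0∞) ∂(τ n) ≤ ε/4 := by
      calc ∫⁻ t in texc, (‖g n t‖₊:ℝ≥0∞) ∂(τ n) ≤ ∫⁻ _ in texc, M'' ∂(τ n) :=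
            setLIntegral_mono' htexcm (fun t _ => hgb n t)
        _ = M'' * τ n texc := setLIntegral_const _ _
        _ ≤ M'' * ε₂ :=
            mul_le_mul_right (hAC texc htexcm (lt_of_le_of_lt htexcμ hrδ) n) _
        _ ≤ ε/4 := hMε₂
    have hb2 : ∫⁻ t in D \ F, (‖g n t‖₊ : ℝ≥0∞) ∂(τ n) ≤ ε/4 := by
      calc ∫⁻ t in D \ F, (‖g n t‖₊:ℝ≥0∞) ∂(τ n) ≤ ∫⁻ _ in D \ F, M'' ∂(τ n) :=
            setLIntegral_mono' (hDmeas.diff hFmeas) (fun t _ => hgb n t)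
        _ = M'' * τ n (D \ F) := setLIntegral_const _ _
        _ ≤ M'' * ε₂ :=
            mul_le_mul_right (hAC _ (hDmeas.diff hFmeas) hFμ n) _
        _ ≤ ε/4 := hMε₂
    have hb3 : ∫⁻ t in F, (‖g n t‖₊ : ℝ≥0∞) ∂(τ n) ≤ ε/4 := by
      have hFe : F = (hFfin.toFinset : Set (Set.Icc (0:ℝ) 1)) :=
        (Set.Finite.coe_toFinset hFfin).symm
      rw [hFe, lintegral_finset]
      exact hnatom
    have hb4 : ∫⁻ t in ⋃ i, (texcᶜ ∩ Dᶜ ∩ S i), (‖g n t‖₊ : ℝ≥0∞) ∂(τ n) ≤ ε/4 := by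
      refine le_trans (lintegral_iUnion_le _ _) ?_
      have hterm : ∀ i, ∫⁻ t in texcᶜ ∩ Dᶜ ∩ S i, (‖g n t‖₊:ℝ≥0∞) ∂(τ n) ≤
          (if i < N₀ then θ * ε₂ else 0) := by
        intro i
        by_cases hi : i < N₀
        · simp only [if_pos hi]
          have hmeasi : MeasurableSet (texcᶜ ∩ Dᶜ ∩ S i) :=
            (htexcm.compl.inter hDmeas.compl).inter (hSmeas i)
          calc ∫⁻ t in texcᶜ ∩ Dᶜ ∩ S i, (‖g n t‖₊:ℝ≥0∞) ∂(τ n)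
              ≤ ∫⁻ _ in texcᶜ ∩ Dᶜ ∩ S i, θ ∂(τ n) :=
                setLIntegral_mono' hmeasi (fun t ht => hn3 t ht.1.1)
            _ = θ * τ n (texcᶜ ∩ Dᶜ ∩ S i) := setLIntegral_const _ _
            _ ≤ θ * ε₂ := by
                refine mul_le_mul_right (hAC _ hmeasi ?_ n) _
                refine lt_of_le_of_lt (measure_mono ?_) (hμS i)
                intro t ht
                exact ⟨ht.2, ht.1.2⟩
        · simp only [if_neg hi]
          have he : texcᶜ ∩ Dᶜ ∩ S i = ∅ := by
            rw [hSempty i (not_lt.1 hi)]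
            simp
          rw [he]
          simp
      calc ∑' i, ∫⁻ t in texcᶜ ∩ Dᶜ ∩ S i, (‖g n t‖₊:ℝ≥0∞) ∂(τ n)
          ≤ ∑' i, (if i < N₀ then θ * ε₂ else 0) := ENNReal.tsum_le_tsum hterm
        _ = ∑ i ∈ Finset.range N₀, (if i < N₀ then θ * ε₂ else 0) :=
            tsum_eq_sum (fun i hi => if_neg (by simpa using hi))
        _ ≤ ∑ i ∈ Finset.range N₀, θ * ε₂ :=
            Finset.sum_le_sum (fun i _ => by split <;> simp)
        _ = (N₀:ℝ≥0∞) * (θ * ε₂) := by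
            rw [Finset.sum_const, Finset.card_range, nsmul_eq_mul]
        _ ≤ ε/4 := hθbound
    calc L n = ∫⁻ t in Set.univ, (‖g n t‖₊:ℝ≥0∞) ∂(τ n) := (setLIntegral_univ _).symm
      _ ≤ ∫⁻ t in texc ∪ ((D \ F) ∪ (F ∪ ⋃ i, (texcᶜ ∩ Dᶜ ∩ S i))),
            (‖g n t‖₊:ℝ≥0∞) ∂(τ n) := lintegral_mono_set hcov
      _ ≤ ε/4 + (ε/4 + (ε/4 + ε/4)) := by
          refine le_trans (lintegral_union_le _ _ _) (add_le_add hb1 ?_)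
          refine le_trans (lintegral_union_le _ _ _) (add_le_add hb2 ?_)
          exact le_trans (lintegral_union_le _ _ _) (add_le_add hb3 hb4)
      _ = ε := by
          rw [show ε/4 + (ε/4 + (ε/4 + ε/4)) = 4*(ε/4) by ring]
          exact ENNReal.mul_div_cancel' (by norm_num) (by norm_num)


  -- conclude
  rw [NormedAddCommGroup.tendsto_nhds_zero]
  intro εr hεr
  have h2 : (0:ℝ≥0∞) < ENNReal.ofReal (εr/2) := ENNReal.ofReal_pos.2 (by linarith)
  filter_upwards [ENNReal.tendsto_nhds_zero.1 main _ h2] with n hn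
  have hLfin : L n ≠ ∞ := (lt_of_le_of_lt hn ENNReal.ofReal_lt_top).ne
  calc ‖sintegral (ν n) (g n)‖ ≤ (L n).toReal := by
        simpa [Real.norm_eq_abs] using mySintegralBound (ν n) (g n) hLfin
    _ ≤ εr/2 := ENNReal.toReal_le_of_le_ofReal (by linarith) hn
    _ < εr := by linarith
end

section
/- Let $X$ be a Banach space and $\sum x_n^*$ a weakly Cauchy series in $X^*$ (i.e. $\sum_n |x_n^*(x)| < \infty$ for every $x \in X$, with $w_1 = \sup_{\|x\|\le 1}\sum_n |x_n^*(x)| < \infty$). For $n \in \mathbb{N}$ let $\varphi_n(t) = x_n^* r_1(t) + x_{n-1}^* r_2(t) + \cdots + x_1^* r_n(t)$, where $r_k$ are the Rademacher functions. Then for every $n$, $\frac{1}{\sqrt 2}\sup_{\|x\|\le 1}\left(|x_1^*(x)|^2 + \cdots + |x_n^*(x)|^2\right)^{1/2} \le \int_0^1 \|\varphi_n(t)\|\,dt$, and $\|\varphi_n(t)\| \le w_1$ for all $t$. Consequently, if $\int_0^1 \|\varphi_n(t)\|\,dt \to 0$ then $x_n^* = 0$ for all $n$. -/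
open Filter Topology MeasureTheory

/-- The `k`-th Rademacher function, `r_k(t) = sign (sin (2^k π t))`. -/
noncomputable def rademacher (k : ℕ) (t : ℝ) : ℝ :=
  Real.sign (Real.sin (2 ^ k * Real.pi * t))


namespace Khin

/-- discrete derivative in coordinate `i` -/
noncomputable def dd {n : ℕ} (g : (Fin n → Bool) → ℝ) (i : Fin n) (s : Fin n → Bool) : ℝ :=
  (g (Function.update s i true) - g (Function.update s i false)) / 2

lemma sum_cube_succ {n : ℕ} (F : (Fin (n+1) → Bool) → ℝ) :
    ∑ s : Fin (n+1) → Bool, F s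
      = ∑ t : Fin n → Bool, (F (Fin.cons true t) + F (Fin.cons false t)) := by
  rw [← Fintype.sum_equiv (Fin.consEquiv (fun _ : Fin (n+1) => Bool))
      (fun p => F (Fin.cons p.1 p.2)) F (fun p => rfl)]
  rw [Fintype.sum_prod_type, Fintype.sum_bool, Finset.sum_add_distrib]

lemma dd_cons_zero {n : ℕ} (g : (Fin (n+1) → Bool) → ℝ) (x : Bool) (t : Fin n → Bool) :
    dd g 0 (Fin.cons x t) = (g (Fin.cons true t) - g (Fin.cons false t)) / 2 := by
  simp [dd, Fin.update_cons_zero]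

lemma dd_cons_succ {n : ℕ} (g : (Fin (n+1) → Bool) → ℝ) (x : Bool) (i : Fin n) (t : Fin n → Bool) :
    dd g i.succ (Fin.cons x t) = dd (fun u => g (Fin.cons x u)) i t := by
  simp [dd, Fin.cons_update]

/-- Poincaré inequality, spectral gap 1 -/
lemma gap1 : ∀ (n : ℕ) (g : (Fin n → Bool) → ℝ), (∑ s, g s = 0) →
    ∑ s, (g s)^2 ≤ ∑ i, ∑ s, (dd g i s)^2 := by
  intro n
  induction n with
  | zero => intro g hg; simp [Finset.sum_eq_zero_iff_of_nonneg] at hg ⊢; simp [hg]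
  | succ n ih =>
    intro g hg
    set a : (Fin n → Bool) → ℝ := fun t => (g (Fin.cons true t) + g (Fin.cons false t)) / 2 with ha
    set b : (Fin n → Bool) → ℝ := fun t => (g (Fin.cons true t) - g (Fin.cons false t)) / 2 with hb
    have hsa : ∑ t, a t = 0 := by
      rw [sum_cube_succ] at hg
      simp only [ha]
      rw [← Finset.sum_div, hg]; simp
    have hg2 : ∑ s, (g s)^2 = ∑ t, ((a t)^2 + (b t)^2) * 2 := by
      rw [sum_cube_succ (fun s => (g s)^2)]
      apply Finset.sum_congr rfl
      intro t _
      simp only [ha, hb]; ring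
    have hD0 : ∑ s, (dd g 0 s)^2 = ∑ t, (b t)^2 * 2 := by
      rw [sum_cube_succ (fun s => (dd g 0 s)^2)]
      apply Finset.sum_congr rfl
      intro t _
      rw [dd_cons_zero, dd_cons_zero]
      simp only [hb]; ring
    have hDsucc : ∀ i : Fin n, ∑ s, (dd g i.succ s)^2
        = ∑ t, ((dd a i t)^2 + (dd b i t)^2) * 2 := by
      intro i
      rw [sum_cube_succ (fun s => (dd g i.succ s)^2)]
      apply Finset.sum_congr rfl
      intro t _
      rw [dd_cons_succ, dd_cons_succ]
      have e1 : dd a i t = (dd (fun u => g (Fin.cons true u)) i t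
          + dd (fun u => g (Fin.cons false u)) i t) / 2 := by
        simp only [dd, ha]; ring
      have e2 : dd b i t = (dd (fun u => g (Fin.cons true u)) i t
          - dd (fun u => g (Fin.cons false u)) i t) / 2 := by
        simp only [dd, hb]; ring
      rw [e1, e2]; ring
    rw [Fin.sum_univ_succ, hg2, hD0]
    have iha := ih a hsa
    calc ∑ t, ((a t)^2 + (b t)^2) * 2
        = (∑ t, (a t)^2) * 2 + (∑ t, (b t)^2) * 2 := by
          rw [Finset.sum_mul, Finset.sum_mul, ← Finset.sum_add_distrib]
          exact Finset.sum_congr rfl (fun t _ => by ring)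
      _ ≤ (∑ i, ∑ t, (dd a i t)^2) * 2 + (∑ t, (b t)^2) * 2 := by nlinarith [iha]
      _ ≤ (∑ t, (b t)^2 * 2) + ∑ i : Fin n, ∑ s, (dd g i.succ s)^2 := by
          simp only [hDsucc]
          have h1 : ∑ i : Fin n, ∑ t, ((dd a i t)^2 + (dd b i t)^2) * 2
              = (∑ i : Fin n, ∑ t, (dd a i t)^2) * 2 + (∑ i : Fin n, ∑ t, (dd b i t)^2) * 2 := by
            rw [Finset.sum_mul, Finset.sum_mul, ← Finset.sum_add_distrib]
            refine Finset.sum_congr rfl (fun i _ => ?_)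
            rw [Finset.sum_mul, Finset.sum_mul, ← Finset.sum_add_distrib]
            exact Finset.sum_congr rfl (fun t _ => by ring)
          rw [h1]
          have hpos : 0 ≤ (∑ i : Fin n, ∑ t, (dd b i t)^2) * 2 := by positivity
          have h2 : (∑ t, (b t)^2 * 2) = (∑ t, (b t)^2) * 2 := by
            rw [Finset.sum_mul]
          linarith

lemma neg_bijective {n : ℕ} : Function.Bijective (fun (s : Fin n → Bool) => fun i => !(s i)) := by
  apply Function.Involutive.bijective
  intro s; funext i; simp

/-- Poincaré inequality for even functions, spectral gap 2 -/
lemma gap2 : ∀ (n : ℕ) (g : (Fin n → Bool) → ℝ), (∑ s, g s = 0) →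
    (∀ s, g (fun i => !(s i)) = g s) →
    2 * ∑ s, (g s)^2 ≤ ∑ i, ∑ s, (dd g i s)^2 := by
  intro n
  induction n with
  | zero =>
    intro g hg _
    simp only [Finset.univ_unique, Finset.sum_singleton] at hg ⊢
    simp [hg]
  | succ n ih =>
    intro g hg heven
    set a : (Fin n → Bool) → ℝ := fun t => (g (Fin.cons true t) + g (Fin.cons false t)) / 2 with ha
    set b : (Fin n → Bool) → ℝ := fun t => (g (Fin.cons true t) - g (Fin.cons false t)) / 2 with hb
    have hnotcons : ∀ (x : Bool) (t : Fin n → Bool),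
        (fun i => !((Fin.cons x t : Fin (n+1) → Bool) i)) = (Fin.cons (!x) (fun i => !(t i)) : Fin (n+1) → Bool) := by
      intro x t; funext i
      refine Fin.cases ?_ ?_ i <;> simp
    have hevc : ∀ (x : Bool) (t : Fin n → Bool),
        g (Fin.cons (!x) (fun i => !(t i))) = g (Fin.cons x t) := by
      intro x t
      rw [← hnotcons]; exact heven _
    have haev : ∀ t, a (fun i => !(t i)) = a t := by
      intro t
      simp only [ha]
      rw [show g (Fin.cons true fun i => !(t i)) = g (Fin.cons false t) from hevc false t,
        show g (Fin.cons false fun i => !(t i)) = g (Fin.cons true t) from hevc true t]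
      ring
    have hbodd : ∀ t, b (fun i => !(t i)) = - b t := by
      intro t
      simp only [hb]
      rw [show g (Fin.cons true fun i => !(t i)) = g (Fin.cons false t) from hevc false t,
        show g (Fin.cons false fun i => !(t i)) = g (Fin.cons true t) from hevc true t]
      ring
    have hsa : ∑ t, a t = 0 := by
      rw [sum_cube_succ] at hg
      simp only [ha]
      rw [← Finset.sum_div]
      rw [hg]; simp
    have hsb : ∑ t, b t = 0 := by
      have h1 : ∑ t, b t = ∑ t : Fin n → Bool, b (fun i => !(t i)) :=
        (Fintype.sum_bijective _ neg_bijective _ _ (fun t => rfl)).symm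
      have h2 : ∑ t : Fin n → Bool, b (fun i => !(t i)) = - ∑ t, b t := by
        rw [← Finset.sum_neg_distrib]
        exact Finset.sum_congr rfl (fun t _ => hbodd t)
      rw [h2] at h1; linarith
    have hg2 : ∑ s, (g s)^2 = ∑ t, ((a t)^2 + (b t)^2) * 2 := by
      rw [sum_cube_succ (fun s => (g s)^2)]
      exact Finset.sum_congr rfl (fun t _ => by simp only [ha, hb]; ring)
    have hD0 : ∑ s, (dd g 0 s)^2 = ∑ t, (b t)^2 * 2 := by
      rw [sum_cube_succ (fun s => (dd g 0 s)^2)]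
      refine Finset.sum_congr rfl (fun t _ => ?_)
      rw [dd_cons_zero, dd_cons_zero]
      simp only [hb]; ring
    have hDsucc : ∀ i : Fin n, ∑ s, (dd g i.succ s)^2
        = ∑ t, ((dd a i t)^2 + (dd b i t)^2) * 2 := by
      intro i
      rw [sum_cube_succ (fun s => (dd g i.succ s)^2)]
      refine Finset.sum_congr rfl (fun t _ => ?_)
      rw [dd_cons_succ, dd_cons_succ]
      have e1 : dd a i t = (dd (fun u => g (Fin.cons true u)) i t
          + dd (fun u => g (Fin.cons false u)) i t) / 2 := by
        simp only [dd, ha]; ring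
      have e2 : dd b i t = (dd (fun u => g (Fin.cons true u)) i t
          - dd (fun u => g (Fin.cons false u)) i t) / 2 := by
        simp only [dd, hb]; ring
      rw [e1, e2]; ring
    have iha := ih a hsa haev
    have ihb := gap1 n b hsb
    rw [Fin.sum_univ_succ, hg2, hD0]
    have hexp : ∑ t, ((a t)^2 + (b t)^2) * 2
        = (∑ t, (a t)^2) * 2 + (∑ t, (b t)^2) * 2 := by
      rw [Finset.sum_mul, Finset.sum_mul, ← Finset.sum_add_distrib]
      exact Finset.sum_congr rfl (fun t _ => by ring)
    have h1 : ∑ i : Fin n, ∑ t, ((dd a i t)^2 + (dd b i t)^2) * 2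
        = (∑ i : Fin n, ∑ t, (dd a i t)^2) * 2 + (∑ i : Fin n, ∑ t, (dd b i t)^2) * 2 := by
      rw [Finset.sum_mul, Finset.sum_mul, ← Finset.sum_add_distrib]
      refine Finset.sum_congr rfl (fun i _ => ?_)
      rw [Finset.sum_mul, Finset.sum_mul, ← Finset.sum_add_distrib]
      exact Finset.sum_congr rfl (fun t _ => by ring)
    simp only [hDsucc]
    rw [hexp, h1]
    have h2 : (∑ t, (b t)^2 * 2) = (∑ t, (b t)^2) * 2 := by rw [Finset.sum_mul]
    rw [h2]
    nlinarith [iha, ihb]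

noncomputable def sg (b : Bool) : ℝ := if b then 1 else -1

lemma sg_not (b : Bool) : sg (!b) = - sg b := by cases b <;> simp [sg]

lemma sg_mul_self (b : Bool) : sg b * sg b = 1 := by cases b <;> simp [sg]

lemma abs_sg (b : Bool) : |sg b| = 1 := by cases b <;> simp [sg]

lemma orth {n : ℕ} (c : Fin n → ℝ) (i j : Fin n) (hij : i ≠ j) :
    ∑ s : Fin n → Bool, sg (s i) * sg (s j) = 0 := by
  have flipbij : Function.Bijective (fun (s : Fin n → Bool) => Function.update s i (!(s i))) := by
    apply Function.Involutive.bijective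
    intro s
    funext k
    by_cases hk : k = i
    · subst hk; simp
    · simp [Function.update_of_ne hk]
  have h1 : ∑ s : Fin n → Bool, sg (s i) * sg (s j)
      = ∑ s : Fin n → Bool, sg (Function.update s i (!(s i)) i) * sg (Function.update s i (!(s i)) j) :=
    (Fintype.sum_bijective _ flipbij _ _ (fun s => rfl)).symm
  have h2 : ∀ s : Fin n → Bool, sg (Function.update s i (!(s i)) i) * sg (Function.update s i (!(s i)) j)
      = - (sg (s i) * sg (s j)) := by
    intro s
    rw [Function.update_self, Function.update_of_ne (Ne.symm hij), sg_not]
    ring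
  rw [Finset.sum_congr rfl (fun s _ => h2 s), Finset.sum_neg_distrib] at h1
  linarith

lemma card_cube (n : ℕ) : (Finset.univ : Finset (Fin n → Bool)).card = 2^n := by
  simp [Finset.card_univ]

lemma sum_f_sq {n : ℕ} (c : Fin n → ℝ) :
    ∑ s : Fin n → Bool, (∑ i, c i * sg (s i))^2 = 2^n * ∑ i, c i ^ 2 := by
  have expand : ∀ s : Fin n → Bool, (∑ i, c i * sg (s i))^2
      = ∑ i, ∑ j, (c i * c j) * (sg (s i) * sg (s j)) := by
    intro s
    rw [sq, Finset.sum_mul_sum]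
    exact Finset.sum_congr rfl (fun i _ => Finset.sum_congr rfl (fun j _ => by ring))
  calc ∑ s : Fin n → Bool, (∑ i, c i * sg (s i))^2
      = ∑ s : Fin n → Bool, ∑ i, ∑ j, (c i * c j) * (sg (s i) * sg (s j)) :=
        Finset.sum_congr rfl (fun s _ => expand s)
    _ = ∑ i, ∑ j, ∑ s : Fin n → Bool, (c i * c j) * (sg (s i) * sg (s j)) := by
        rw [Finset.sum_comm]
        exact Finset.sum_congr rfl (fun i _ => Finset.sum_comm)
    _ = ∑ i, ∑ j, (c i * c j) * ∑ s : Fin n → Bool, (sg (s i) * sg (s j)) := by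
        exact Finset.sum_congr rfl (fun i _ => Finset.sum_congr rfl (fun j _ =>
          (Finset.mul_sum _ _ _).symm))
    _ = ∑ i, (c i * c i) * (2^n : ℝ) := by
        refine Finset.sum_congr rfl (fun i _ => ?_)
        rw [Finset.sum_eq_single i]
        · have : ∑ s : Fin n → Bool, sg (s i) * sg (s i) = 2^n := by
            rw [Finset.sum_congr rfl (fun s _ => sg_mul_self (s i))]
            simp [card_cube]
          rw [this]
        · intro j _ hji
          rw [orth c i j (Ne.symm hji)]
          ring
        · intro h; exact absurd (Finset.mem_univ i) h
    _ = 2^n * ∑ i, c i ^ 2 := by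
        rw [Finset.mul_sum]
        exact Finset.sum_congr rfl (fun i _ => by ring)

lemma f_neg {n : ℕ} (c : Fin n → ℝ) (s : Fin n → Bool) :
    ∑ i, c i * sg (!(s i)) = - ∑ i, c i * sg (s i) := by
  rw [← Finset.sum_neg_distrib]
  exact Finset.sum_congr rfl (fun i _ => by rw [sg_not]; ring)

/-- Discrete Khinchin inequality with constant `1/√2`. -/
lemma khinchin_discrete {n : ℕ} (c : Fin n → ℝ) :
    (Real.sqrt 2)⁻¹ * Real.sqrt (∑ i, c i ^ 2) ≤
      ((2:ℝ)^n)⁻¹ * ∑ s : Fin n → Bool, |∑ i, c i * sg (s i)| := by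
  set N : ℝ := (2:ℝ)^n with hNdef
  have hN : (0:ℝ) < N := by positivity
  set S : ℝ := ∑ i, c i ^ 2 with hSdef
  have hS : 0 ≤ S := Finset.sum_nonneg (fun i _ => sq_nonneg _)
  set f : (Fin n → Bool) → ℝ := fun s => ∑ i, c i * sg (s i) with hf
  set T : ℝ := ∑ s, |f s| with hT
  set L : ℝ := N⁻¹ * T with hL
  have hTL : T = N * L := by rw [hL]; field_simp
  have hLnn : 0 ≤ L := by
    apply mul_nonneg (le_of_lt (by positivity))
    exact Finset.sum_nonneg (fun s _ => abs_nonneg _)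
  set ρ : (Fin n → Bool) → ℝ := fun s => |f s| - L with hρ
  have hsum_const : ∑ _s : Fin n → Bool, L = N * L := by
    rw [Finset.sum_const, card_cube, nsmul_eq_mul]
    push_cast
    rfl
  have hρ0 : ∑ s, ρ s = 0 := by
    simp only [hρ]
    rw [Finset.sum_sub_distrib, hsum_const, ← hT, hTL, sub_self]
  have hρeven : ∀ s, ρ (fun i => !(s i)) = ρ s := by
    intro s
    simp only [hρ, hf]
    rw [f_neg c s, abs_neg]
  have hρsq : ∑ s, (ρ s)^2 = N * S - N * L^2 := by
    have : ∀ s, (ρ s)^2 = (f s)^2 - 2 * L * |f s| + L^2 := by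
      intro s
      simp only [hρ]
      rw [sub_sq, sq_abs]; ring
    rw [Finset.sum_congr rfl (fun s _ => this s)]
    rw [Finset.sum_add_distrib, Finset.sum_sub_distrib]
    have h1 : ∑ s, (f s)^2 = N * S := sum_f_sq c
    have h2 : ∑ s, 2 * L * |f s| = 2 * L * T := by rw [← Finset.mul_sum, hT]
    have h3 : ∑ _s : Fin n → Bool, L^2 = N * L^2 := by
      rw [Finset.sum_const, card_cube, nsmul_eq_mul]; push_cast; rfl
    rw [h1, h2, h3, hTL]; ring
  have hdd : ∀ (i : Fin n) (s : Fin n → Bool), (dd ρ i s)^2 ≤ c i ^ 2 := by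
    intro i s
    have hddeq : dd ρ i s = (|f (Function.update s i true)| - |f (Function.update s i false)|) / 2 := by
      simp only [dd, hρ]; ring
    have hfdiff : f (Function.update s i true) - f (Function.update s i false) = 2 * c i := by
      simp only [hf]
      rw [← Finset.sum_sub_distrib]
      rw [Finset.sum_eq_single i]
      · rw [Function.update_self, Function.update_self]
        simp [sg]; ring
      · intro j _ hji
        rw [Function.update_of_ne hji, Function.update_of_ne hji]
        ring
      · intro h; exact absurd (Finset.mem_univ i) h
    have habs : |dd ρ i s| ≤ |c i| := by
      rw [hddeq, abs_div, abs_two]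
      have h1 : |(|f (Function.update s i true)| - |f (Function.update s i false)|)|
          ≤ |f (Function.update s i true) - f (Function.update s i false)| :=
        abs_abs_sub_abs_le_abs_sub _ _
      rw [hfdiff, abs_mul, abs_two] at h1
      linarith
    calc (dd ρ i s)^2 = |dd ρ i s|^2 := (sq_abs _).symm
      _ ≤ |c i|^2 := by
          apply pow_le_pow_left₀ (abs_nonneg _) habs
      _ = c i ^2 := sq_abs _
  have hDir : ∑ i, ∑ s, (dd ρ i s)^2 ≤ N * S := by
    calc ∑ i, ∑ s, (dd ρ i s)^2 ≤ ∑ i : Fin n, ∑ _s : Fin n → Bool, c i ^2 := by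
          apply Finset.sum_le_sum
          intro i _
          exact Finset.sum_le_sum (fun s _ => hdd i s)
      _ = ∑ i : Fin n, N * c i ^ 2 := by
          refine Finset.sum_congr rfl (fun i _ => ?_)
          rw [Finset.sum_const, card_cube, nsmul_eq_mul]; push_cast; rfl
      _ = N * S := by rw [← Finset.mul_sum]
  have hmain := gap2 n ρ hρ0 hρeven
  rw [hρsq] at hmain
  have hSL : S ≤ 2 * L^2 := by nlinarith
  have : Real.sqrt S ≤ Real.sqrt 2 * L := by
    rw [show Real.sqrt 2 * L = Real.sqrt 2 * Real.sqrt (L^2) by rw [Real.sqrt_sq hLnn]]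
    rw [← Real.sqrt_mul (by norm_num)]
    exact Real.sqrt_le_sqrt hSL
  have hsqrt2 : (0:ℝ) < Real.sqrt 2 := by positivity
  rw [inv_mul_le_iff₀ hsqrt2]
  exact this



lemma sign_sin_Ioo (m : ℕ) (u : ℝ) (h1 : (m:ℝ) < u) (h2 : u < m + 1) :
    Real.sign (Real.sin (Real.pi * u)) = (-1:ℝ)^m := by
  have key : Real.sin (Real.pi * u) = (-1:ℝ)^(m:ℤ) * Real.sin (Real.pi * (u - m)) := by
    rw [show Real.pi * u = Real.pi * (u - m) + (m:ℤ) * Real.pi by push_cast; ring]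
    rw [Real.sin_add_int_mul_pi]
  have hpos : 0 < Real.sin (Real.pi * (u - m)) := by
    apply Real.sin_pos_of_pos_of_lt_pi
    · have : 0 < u - m := by linarith
      positivity
    · nlinarith [Real.pi_pos, Real.pi_gt_three]
  rw [key]
  rcases Nat.even_or_odd m with he | ho
  · rw [Even.neg_one_zpow ((Int.even_coe_nat m).mpr he)]
    rw [he.neg_one_pow]
    rw [one_mul]
    exact Real.sign_of_pos hpos
  · rw [Odd.neg_one_zpow ((Int.odd_coe_nat m).mpr ho)]
    rw [ho.neg_one_pow]
    rw [neg_one_mul, Real.sign_neg, Real.sign_of_pos hpos]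

lemma rad_const {n k j : ℕ} (hk : k < n) {t : ℝ}
    (h1 : (j:ℝ)/2^n < t) (h2 : t < ((j:ℝ)+1)/2^n) :
    rademacher (k+1) t = (-1:ℝ)^(j / 2^(n-1-k)) := by
  set M : ℕ := 2^(n-1-k) with hM
  set m : ℕ := j / M with hm
  have hMpos : 0 < M := by rw [hM]; positivity
  have hpow : (2:ℝ)^(k+1) * (2:ℝ)^(n-1-k) = 2^n := by
    rw [← pow_add]; congr 1; omega
  have key : ∀ r : ℝ, (2:ℝ)^(k+1) * (r/2^n) = r/(M:ℝ) := by
    intro r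
    have hMr : ((M:ℕ):ℝ) = (2:ℝ)^(n-1-k) := by push_cast [hM]; norm_num
    rw [hMr, mul_div_assoc', div_eq_div_iff (by positivity) (by positivity)]
    linear_combination r * hpow
  set u : ℝ := 2^(k+1) * t with hu
  have hu1 : (j:ℝ)/(M:ℝ) < u := by
    rw [← key]
    apply mul_lt_mul_of_pos_left h1 (by positivity)
  have hu2 : u < ((j:ℝ)+1)/(M:ℝ) := by
    rw [← key]
    apply mul_lt_mul_of_pos_left h2 (by positivity)
  have hml : (m:ℝ) ≤ (j:ℝ)/(M:ℝ) := by
    rw [le_div_iff₀ (by exact_mod_cast hMpos)]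
    exact_mod_cast Nat.div_mul_le_self j M
  have hmr : ((j:ℝ)+1)/(M:ℝ) ≤ (m:ℝ) + 1 := by
    rw [div_le_iff₀ (by exact_mod_cast hMpos)]
    have h0 : M * m + j % M = j := by rw [hm]; exact Nat.div_add_mod j M
    have h1 : j % M < M := Nat.mod_lt j hMpos
    have : j + 1 ≤ (m+1) * M := by rw [add_mul, one_mul, mul_comm]; omega
    exact_mod_cast this
  have := sign_sin_Ioo m u (lt_of_le_of_lt hml hu1) (lt_of_lt_of_le hu2 hmr)
  rw [← this]
  unfold rademacher
  congr 1
  rw [hu]; ring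

lemma measurable_rsign : Measurable Real.sign := by
  unfold Real.sign
  refine Measurable.ite (measurableSet_lt measurable_id measurable_const) measurable_const ?_
  exact Measurable.ite (measurableSet_lt measurable_const measurable_id) measurable_const
    measurable_const

lemma measurable_rademacher (k : ℕ) : Measurable (rademacher k) := by
  unfold rademacher
  exact measurable_rsign.comp
    (Real.continuous_sin.comp ((continuous_const.mul continuous_id))).measurable

lemma abs_rademacher_le (k : ℕ) (t : ℝ) : |rademacher k t| ≤ 1 := by
  unfold rademacher
  rcases Real.sign_apply_eq (Real.sin (2 ^ k * Real.pi * t)) with h | h | h <;> rw [h] <;> norm_num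


end Khin

noncomputable section
namespace Khin

def cubeEnum (n : ℕ) (j : Fin (2^n)) : Fin n → Bool := fun k => !(Nat.testBit j.val (n-1-k.val))

lemma cubeEnum_bij (n : ℕ) : Function.Bijective (cubeEnum n) := by
  rw [Fintype.bijective_iff_injective_and_card]
  refine ⟨?_, by simp⟩
  intro j j' h
  apply Fin.ext
  apply Nat.eq_of_testBit_eq
  intro i
  by_cases hi : i < n
  · have hk : n - 1 - (n - 1 - i) = i := by omega
    have h2 := congrFun h ⟨n-1-i, by omega⟩
    simp only [cubeEnum, hk] at h2
    exact Bool.not_inj h2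
  · have b1 : Nat.testBit j.val i = false :=
      Nat.testBit_lt_two_pow (lt_of_lt_of_le j.isLt (Nat.pow_le_pow_right (by norm_num) (le_of_not_gt hi)))
    have b2 : Nat.testBit j'.val i = false :=
      Nat.testBit_lt_two_pow (lt_of_lt_of_le j'.isLt (Nat.pow_le_pow_right (by norm_num) (le_of_not_gt hi)))
    rw [b1, b2]

lemma sg_cubeEnum {n : ℕ} (j : Fin (2^n)) (k : Fin n) :
    sg (cubeEnum n j k) = (-1:ℝ)^(j.val / 2^(n-1-k.val)) := by
  rcases Nat.even_or_odd (j.val / 2^(n-1-k.val)) with he | ho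
  · rw [he.neg_one_pow]
    have : Nat.testBit j.val (n-1-k.val) = false := by
      rw [Nat.testBit_eq_decide_div_mod_eq, decide_eq_false_iff_not]
      rw [Nat.even_iff] at he
      omega
    simp [cubeEnum, this, sg]
  · rw [ho.neg_one_pow]
    have : Nat.testBit j.val (n-1-k.val) = true := by
      rw [Nat.testBit_eq_decide_div_mod_eq, decide_eq_true_eq]
      rw [Nat.odd_iff] at ho
      exact ho
    simp [cubeEnum, this, sg]

variable {X : Type*} [NormedAddCommGroup X] [NormedSpace ℝ X]

/-- Part 2 : uniform bound by `w`. -/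
lemma part2 (x' : ℕ → X →L[ℝ] ℝ) (hsum : ∀ x : X, Summable fun n => |x' n x|)
    (w : ℝ) (hw : ∀ x : X, ‖x‖ ≤ 1 → ∑' n, |x' n x| ≤ w) (n : ℕ) (t : ℝ) :
    ‖∑ k ∈ Finset.range n, rademacher (k + 1) t • x' (n - 1 - k)‖ ≤ w := by
  have hw0 : 0 ≤ w := by
    have h0 : ∑' m, |x' m (0:X)| = 0 := by simp
    have := hw 0 (by simp)
    rw [h0] at this; exact this
  have key : ∀ y : X, ‖y‖ ≤ 1 →
      |(∑ k ∈ Finset.range n, rademacher (k + 1) t • x' (n - 1 - k)) y| ≤ w := by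
    intro y hy
    have happ : (∑ k ∈ Finset.range n, rademacher (k + 1) t • x' (n - 1 - k)) y
        = ∑ k ∈ Finset.range n, rademacher (k + 1) t * (x' (n - 1 - k) y) := by
      rw [ContinuousLinearMap.sum_apply]
      exact Finset.sum_congr rfl (fun k _ => rfl)
    rw [happ]
    calc |∑ k ∈ Finset.range n, rademacher (k + 1) t * (x' (n - 1 - k) y)|
        ≤ ∑ k ∈ Finset.range n, |rademacher (k + 1) t * (x' (n - 1 - k) y)| :=
          Finset.abs_sum_le_sum_abs _ _
      _ ≤ ∑ k ∈ Finset.range n, |x' (n - 1 - k) y| := by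
          apply Finset.sum_le_sum
          intro k _
          rw [abs_mul]
          calc |rademacher (k+1) t| * |x' (n-1-k) y| ≤ 1 * |x' (n-1-k) y| := by
                apply mul_le_mul_of_nonneg_right (abs_rademacher_le _ _) (abs_nonneg _)
            _ = |x' (n-1-k) y| := one_mul _
      _ = ∑ k ∈ Finset.range n, |x' k y| := Finset.sum_range_reflect (fun k => |x' k y|) n
      _ ≤ ∑' m, |x' m y| := (hsum y).sum_le_tsum _ (fun i _ => abs_nonneg _)
      _ ≤ w := hw y hy
  apply ContinuousLinearMap.opNorm_le_bound _ hw0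
  intro y
  rcases eq_or_ne y 0 with rfl | hy0
  · simp
  · have hny : 0 < ‖y‖ := norm_pos_iff.mpr hy0
    have h1 : ‖(‖y‖⁻¹ • y)‖ ≤ 1 := by
      rw [norm_smul, norm_inv, norm_norm, inv_mul_cancel₀ (ne_of_gt hny)]
    have := key (‖y‖⁻¹ • y) h1
    rw [_root_.map_smul] at this
    rw [smul_eq_mul, abs_mul, abs_inv, abs_norm] at this
    calc ‖(∑ k ∈ Finset.range n, rademacher (k + 1) t • x' (n - 1 - k)) y‖
        = ‖y‖ * (‖y‖⁻¹ * |(∑ k ∈ Finset.range n, rademacher (k + 1) t • x' (n - 1 - k)) y|) := by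
          rw [← mul_assoc, mul_inv_cancel₀ (ne_of_gt hny), one_mul]; rfl
      _ ≤ ‖y‖ * w := mul_le_mul_of_nonneg_left this (norm_nonneg y)
      _ = w * ‖y‖ := mul_comm _ _

end Khin

namespace Khin
open MeasureTheory intervalIntegral

lemma intInt {f : ℝ → ℝ} (hf : StronglyMeasurable f) (B : ℝ) (hb : ∀ t, ‖f t‖ ≤ B)
    (a b : ℝ) : IntervalIntegrable f volume a b := by
  rw [intervalIntegrable_iff]
  apply MeasureTheory.Integrable.mono' (g := fun _ => B)
  · exact MeasureTheory.integrableOn_const measure_Ioc_lt_top.ne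
  · exact hf.aestronglyMeasurable.restrict
  · exact MeasureTheory.ae_of_all _ hb

variable {X : Type*} [NormedAddCommGroup X] [NormedSpace ℝ X]

/-- Part 1 : Khinchin lower bound for the integral. -/
lemma part1 (x' : ℕ → X →L[ℝ] ℝ) (n : ℕ) (x : X) (hx : ‖x‖ ≤ 1) :
    (Real.sqrt 2)⁻¹ * Real.sqrt (∑ k ∈ Finset.range n, (x' k x) ^ 2) ≤
      ∫ t in (0:ℝ)..1, ‖∑ k ∈ Finset.range n, rademacher (k + 1) t • x' (n - 1 - k)‖ := by
  classical
  set Φ : ℝ → ℝ := fun t => ‖∑ k ∈ Finset.range n, rademacher (k + 1) t • x' (n - 1 - k)‖ with hΦ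
  set ψ : ℝ → ℝ := fun t => ∑ k ∈ Finset.range n, rademacher (k + 1) t * (x' (n - 1 - k) x) with hψ
  have hψΦ : ∀ t, |ψ t| ≤ Φ t := by
    intro t
    have happ : (∑ k ∈ Finset.range n, rademacher (k + 1) t • x' (n - 1 - k)) x = ψ t := by
      rw [ContinuousLinearMap.sum_apply]
      exact Finset.sum_congr rfl (fun k _ => rfl)
    calc |ψ t| = ‖(∑ k ∈ Finset.range n, rademacher (k + 1) t • x' (n - 1 - k)) x‖ := by
          rw [happ]; rfl
      _ ≤ Φ t * ‖x‖ := ContinuousLinearMap.le_opNorm _ _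
      _ ≤ Φ t * 1 := mul_le_mul_of_nonneg_left hx (norm_nonneg _)
      _ = Φ t := mul_one _
  have hradSM : ∀ k : ℕ, StronglyMeasurable (rademacher k) :=
    fun k => (measurable_rademacher k).stronglyMeasurable
  have hΦSM : StronglyMeasurable Φ := by
    apply StronglyMeasurable.norm
    apply Finset.stronglyMeasurable_fun_sum
    intro k _
    exact (hradSM (k+1)).smul_const _
  have hψSM : StronglyMeasurable ψ := by
    apply Finset.stronglyMeasurable_fun_sum
    intro k _
    exact (hradSM (k+1)).mul_const _
  set B : ℝ := ∑ k ∈ Finset.range n, ‖x' (n - 1 - k)‖ with hB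
  have hΦb : ∀ t, ‖Φ t‖ ≤ B := by
    intro t
    rw [norm_norm]
    refine (norm_sum_le _ _).trans ?_
    apply Finset.sum_le_sum
    intro k _
    refine le_trans (norm_smul_le (rademacher (k+1) t) (x' (n-1-k))) ?_
    calc ‖rademacher (k+1) t‖ * ‖x' (n-1-k)‖ ≤ 1 * ‖x' (n-1-k)‖ :=
          mul_le_mul_of_nonneg_right (abs_rademacher_le _ _) (norm_nonneg _)
      _ = ‖x' (n-1-k)‖ := one_mul _
  have hψb : ∀ t, ‖|ψ t|‖ ≤ B := by
    intro t
    rw [Real.norm_eq_abs, abs_abs]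
    exact (hψΦ t).trans (le_trans (le_abs_self _) (by rw [← Real.norm_eq_abs]; exact hΦb t))
  have hΦint : IntervalIntegrable Φ volume 0 1 := intInt hΦSM B hΦb 0 1
  have hψaint : ∀ a b : ℝ, IntervalIntegrable (fun t => |ψ t|) volume a b :=
    fun a b => intInt (hψSM.measurable.abs).stronglyMeasurable B hψb a b
  have hmono : (∫ t in (0:ℝ)..1, |ψ t|) ≤ ∫ t in (0:ℝ)..1, Φ t :=
    intervalIntegral.integral_mono_on (by norm_num) (hψaint 0 1) hΦint (fun t _ => hψΦ t)
  set N : ℕ := 2^n with hN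
  set a : ℕ → ℝ := fun j => (j:ℝ) / 2^n with ha
  have ha0 : a 0 = 0 := by simp [ha]
  have haN : a N = 1 := by
    simp only [ha, hN]
    push_cast
    exact div_self (by positivity)
  have hsplit : ∑ j ∈ Finset.range N, ∫ t in a j..a (j+1), |ψ t| = ∫ t in (0:ℝ)..1, |ψ t| := by
    rw [← ha0, ← haN]
    exact intervalIntegral.sum_integral_adjacent_intervals (fun j _ => hψaint _ _)
  set V : ℕ → ℝ := fun j =>
    ∑ k ∈ Finset.range n, (-1:ℝ)^(j / 2^(n-1-k)) * (x' (n-1-k) x) with hV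
  have hpiece : ∀ j ∈ Finset.range N, (∫ t in a j..a (j+1), |ψ t|) = ((2:ℝ)^n)⁻¹ * |V j| := by
    intro j hj
    have hab : a j < a (j+1) := by
      simp only [ha]
      rw [div_lt_div_iff₀ (by positivity) (by positivity)]
      push_cast
      nlinarith [pow_pos (show (0:ℝ) < 2 by norm_num) n]
    have hsing : ∀ᵐ t ∂(volume : Measure ℝ), t ≠ a (j+1) := by
      rw [MeasureTheory.ae_iff]
      have hset : {t : ℝ | ¬ t ≠ a (j+1)} = {a (j+1)} := by ext u; simp
      rw [hset]
      exact measure_singleton _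
    have hae : ∀ᵐ t ∂(volume : Measure ℝ), t ∈ Set.uIoc (a j) (a (j+1)) →
        |ψ t| = |V j| := by
      filter_upwards [hsing] with t ht hmem
      rw [Set.uIoc_of_le (le_of_lt hab)] at hmem
      have htIoo : a j < t ∧ t < a (j+1) := ⟨hmem.1, lt_of_le_of_ne hmem.2 ht⟩
      have hψt : ψ t = V j := by
        simp only [hψ, hV]
        apply Finset.sum_congr rfl
        intro k hk
        rw [Finset.mem_range] at hk
        have h2 : t < ((j:ℝ)+1)/2^n := by
          have := htIoo.2
          simp only [ha] at this
          push_cast at this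
          exact this
        rw [rad_const hk htIoo.1 h2]
      rw [hψt]
    rw [intervalIntegral.integral_congr_ae hae, intervalIntegral.integral_const]
    simp only [ha, smul_eq_mul]
    push_cast
    congr 1
    field_simp
    ring
  have hNinv : (∫ t in (0:ℝ)..1, |ψ t|) = ∑ j ∈ Finset.range N, ((2:ℝ)^n)⁻¹ * |V j| := by
    rw [← hsplit]
    exact Finset.sum_congr rfl hpiece
  -- discrete Khinchin
  set c : Fin n → ℝ := fun i => x' (n-1-(i:ℕ)) x with hc
  have hVf : ∀ j : Fin N, ∑ i, c i * sg (cubeEnum n j i) = V j.val := by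
    intro j
    refine Eq.trans (Finset.sum_congr rfl (fun i _ => ?_))
      (Fin.sum_univ_eq_sum_range (fun k => (-1:ℝ)^(j.val / 2^(n-1-k)) * (x' (n-1-k) x)) n)
    rw [sg_cubeEnum]
    simp only [hc]
    ring
  have hbij : ∑ s : Fin n → Bool, |∑ i, c i * sg (s i)| = ∑ j : Fin N, |V j.val| := by
    refine (Fintype.sum_bijective (cubeEnum n) (cubeEnum_bij n)
      (fun j => |V j.val|) (fun s => |∑ i, c i * sg (s i)|) ?_).symm
    intro j
    exact (congrArg (fun z => |z|) (hVf j)).symm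
  have hcs : ∑ i : Fin n, c i ^ 2 = ∑ k ∈ Finset.range n, (x' k x)^2 := by
    refine Eq.trans (Fin.sum_univ_eq_sum_range (fun k => (x' (n-1-k) x)^2) n)
      (Finset.sum_range_reflect (fun k => (x' k x)^2) n)
  have hkh := khinchin_discrete c
  calc (Real.sqrt 2)⁻¹ * Real.sqrt (∑ k ∈ Finset.range n, (x' k x) ^ 2)
      = (Real.sqrt 2)⁻¹ * Real.sqrt (∑ i : Fin n, c i ^ 2) := by rw [hcs]
    _ ≤ ((2:ℝ)^n)⁻¹ * ∑ s : Fin n → Bool, |∑ i, c i * sg (s i)| := hkh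
    _ = ((2:ℝ)^n)⁻¹ * ∑ j : Fin N, |V j.val| := by rw [hbij]
    _ = ((2:ℝ)^n)⁻¹ * ∑ j ∈ Finset.range N, |V j| := by
        rw [Fin.sum_univ_eq_sum_range (fun j => |V j|) N]
    _ = ∑ j ∈ Finset.range N, ((2:ℝ)^n)⁻¹ * |V j| := Finset.mul_sum _ _ _
    _ = ∫ t in (0:ℝ)..1, |ψ t| := hNinv.symm
    _ ≤ ∫ t in (0:ℝ)..1, Φ t := hmono

end Khin

theorem stmt12 {X : Type*} [NormedAddCommGroup X] [NormedSpace ℝ X] [CompleteSpace X]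
    (x' : ℕ → X →L[ℝ] ℝ)
    (hsum : ∀ x : X, Summable fun n => |x' n x|)
    (w : ℝ) (hw : ∀ x : X, ‖x‖ ≤ 1 → ∑' n, |x' n x| ≤ w) :
    (∀ n : ℕ, ∀ x : X, ‖x‖ ≤ 1 →
      (Real.sqrt 2)⁻¹ * Real.sqrt (∑ k ∈ Finset.range n, (x' k x) ^ 2) ≤
        ∫ t in (0:ℝ)..1, ‖∑ k ∈ Finset.range n, rademacher (k + 1) t • x' (n - 1 - k)‖) ∧
    (∀ n : ℕ, ∀ t : ℝ,
      ‖∑ k ∈ Finset.range n, rademacher (k + 1) t • x' (n - 1 - k)‖ ≤ w) ∧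
    ((Tendsto
        (fun n => ∫ t in (0:ℝ)..1, ‖∑ k ∈ Finset.range n, rademacher (k + 1) t • x' (n - 1 - k)‖)
        atTop (𝓝 0)) → ∀ n, x' n = 0) := by
  refine ⟨fun n x hx => Khin.part1 x' n x hx, fun n t => Khin.part2 x' hsum w hw n t, ?_⟩
  intro htend m
  ext y
  simp only [ContinuousLinearMap.zero_apply]
  rcases eq_or_ne y 0 with rfl | hy0
  · simp
  · have hny : ‖y‖ ≠ 0 := norm_ne_zero_iff.mpr hy0
    set z : X := ‖y‖⁻¹ • y with hzdef
    have hz : ‖z‖ ≤ 1 := by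
      rw [hzdef, norm_smul, norm_inv, norm_norm, inv_mul_cancel₀ hny]
    have hbound : ∀ n ≥ m + 1, (Real.sqrt 2)⁻¹ * |x' m z| ≤
        ∫ t in (0:ℝ)..1, ‖∑ k ∈ Finset.range n, rademacher (k + 1) t • x' (n - 1 - k)‖ := by
      intro n hn
      refine le_trans ?_ (Khin.part1 x' n z hz)
      apply mul_le_mul_of_nonneg_left ?_ (by positivity)
      have h1 : (x' m z)^2 ≤ ∑ k ∈ Finset.range n, (x' k z)^2 :=
        Finset.single_le_sum (fun i _ => sq_nonneg ((x' i) z)) (Finset.mem_range.mpr (by omega))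
      calc |x' m z| = Real.sqrt ((x' m z)^2) := (Real.sqrt_sq_eq_abs _).symm
        _ ≤ Real.sqrt (∑ k ∈ Finset.range n, (x' k z)^2) := Real.sqrt_le_sqrt h1
    have hlim : (Real.sqrt 2)⁻¹ * |x' m z| ≤ 0 :=
      ge_of_tendsto htend (Filter.eventually_atTop.mpr ⟨m + 1, hbound⟩)
    have hs2 : (0:ℝ) < (Real.sqrt 2)⁻¹ := by positivity
    have habs : |x' m z| = 0 := by nlinarith [abs_nonneg (x' m z)]
    have hz0 : x' m z = 0 := abs_eq_zero.mp habs
    rw [hzdef, _root_.map_smul, smul_eq_mul, mul_eq_zero] at hz0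
    rcases hz0 with h | h
    · exact absurd h (inv_ne_zero hny)
    · exact h
end
end

section
/- The space $w_1(L_\infty[0,1])$ of weakly Cauchy series coincides with $L_\infty([0,1], \ell_1)$: for $g_n \in L_\infty[0,1]$, the series $\sum_n g_n$ is weakly Cauchy in $L_\infty[0,1] = L_1[0,1]^*$ (i.e. $\sum_n |\int_0^1 g_n f| < \infty$ for all $f \in L_1[0,1]$) if and only if the function $g = (g_n)_n$ belongs to $L_\infty([0,1], \ell_1)$, i.e. $(g_n(t))_n \in \ell_1$ for a.e. $t$ with $\mathrm{ess\,sup}_t \sum_n |g_n(t)| < \infty$ (after modifying each $g_n$ on a null set). -/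
open Filter Topology MeasureTheory
open scoped ENNReal

section Aux

variable {α : Type*} [MeasurableSpace α] {μ : MeasureTheory.Measure α} [IsFiniteMeasure μ]

/-- The pairing of a (everywhere) bounded a.e. strongly measurable function with `L¹`,
as a continuous linear functional. -/
noncomputable def pairCLM (h : α → ℝ) (hm : AEStronglyMeasurable h μ) (M : ℝ)
    (hb : ∀ t, |h t| ≤ M) : Lp ℝ 1 μ →L[ℝ] ℝ :=
  LinearMap.mkContinuous
    { toFun := fun f => ∫ t, h t * f t ∂μ
      map_add' := by
        intro f f'
        have h1 : Integrable (fun t => h t * f t) μ :=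
          (L1.integrable_coeFn f).bdd_mul hm (Eventually.of_forall fun t => by simpa using hb t)
        have h2 : Integrable (fun t => h t * f' t) μ :=
          (L1.integrable_coeFn f').bdd_mul hm (Eventually.of_forall fun t => by simpa using hb t)
        rw [← integral_add h1 h2]
        refine integral_congr_ae ?_
        filter_upwards [Lp.coeFn_add f f'] with t ht
        simp only [ht, Pi.add_apply]
        ring
      map_smul' := by
        intro c f
        rw [RingHom.id_apply, ← integral_smul]
        refine integral_congr_ae ?_
        filter_upwards [Lp.coeFn_smul c f] with t ht
        simp only [ht, Pi.smul_apply, smul_eq_mul]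
        ring }
    M
    (by
      intro f
      have h1 : Integrable (fun t => h t * f t) μ :=
        (L1.integrable_coeFn f).bdd_mul hm (Eventually.of_forall fun t => by simpa using hb t)
      simp only [LinearMap.coe_mk, AddHom.coe_mk]
      calc ‖∫ t, h t * f t ∂μ‖ ≤ ∫ t, ‖h t * f t‖ ∂μ := norm_integral_le_integral_norm _
        _ ≤ ∫ t, M * ‖f t‖ ∂μ := by
            refine integral_mono h1.norm ((L1.integrable_coeFn f).norm.const_mul M) fun t => ?_
            rw [norm_mul]
            exact mul_le_mul_of_nonneg_right (by simpa using hb t) (norm_nonneg _)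
        _ = M * ‖f‖ := by rw [integral_const_mul, L1.norm_eq_integral_norm])

omit [IsFiniteMeasure μ] in
@[simp] lemma pairCLM_apply (h : α → ℝ) (hm : AEStronglyMeasurable h μ) (M : ℝ)
    (hb : ∀ t, |h t| ≤ M) (f : Lp ℝ 1 μ) :
    pairCLM h hm M hb f = ∫ t, h t * f t ∂μ := rfl

lemma integrable_of_bdd {h : α → ℝ} {M : ℝ} (hm : AEStronglyMeasurable h μ)
    (hb : ∀ t, |h t| ≤ M) : Integrable h μ :=
  memLp_one_iff_integrable.mp
    (MemLp.of_bound hm M (Eventually.of_forall fun t => by simpa using hb t))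

/-- If the pairing with `L¹` has operator norm at most `C`, then `h ≤ C` a.e. -/
lemma ae_le_of_opNorm_le {h : α → ℝ} {M : ℝ} {hm : AEStronglyMeasurable h μ}
    {hb : ∀ t, |h t| ≤ M} {C : ℝ} (hC : ‖pairCLM h hm M hb‖ ≤ C) :
    ∀ᵐ t ∂μ, h t ≤ C := by
  have hint : Integrable h μ := integrable_of_bdd hm hb
  have key : ∀ s : Set α, MeasurableSet s → ∫ t in s, h t ∂μ ≤ C * (μ s).toReal := by
    intro s hs
    set e : Lp ℝ 1 μ := indicatorConstLp 1 hs (measure_ne_top μ s) (1 : ℝ) with he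
    have hnorm : ‖e‖ = (μ s).toReal := by
      rw [he, norm_indicatorConstLp one_ne_zero ENNReal.one_ne_top]
      simp [Measure.real]
    have happ : pairCLM h hm M hb e = ∫ t in s, h t ∂μ := by
      rw [pairCLM_apply, ← integral_indicator hs]
      refine integral_congr_ae ?_
      filter_upwards [indicatorConstLp_coeFn (p := 1) (hs := hs)
        (hμs := measure_ne_top μ s) (c := (1 : ℝ))] with t ht
      rw [ht]
      by_cases hts : t ∈ s
      · simp [Set.indicator_of_mem hts]
      · simp [Set.indicator_of_notMem hts]
    calc ∫ t in s, h t ∂μ = pairCLM h hm M hb e := happ.symm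
      _ ≤ ‖pairCLM h hm M hb e‖ := le_abs_self _
      _ ≤ ‖pairCLM h hm M hb‖ * ‖e‖ := (pairCLM h hm M hb).le_opNorm e
      _ ≤ C * (μ s).toReal := by
          rw [hnorm]
          exact mul_le_mul_of_nonneg_right hC ENNReal.toReal_nonneg
  have h0 : 0 ≤ᵐ[μ] fun t => C - h t := by
    refine ae_nonneg_of_forall_setIntegral_nonneg ((integrable_const C).sub hint) ?_
    intro s hs _
    rw [integral_sub (integrableOn_const (C := C) (measure_ne_top μ s)) hint.integrableOn,
      setIntegral_const, smul_eq_mul, mul_comm]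
    have hk := key s hs
    rw [← measureReal_def] at hk
    linarith [hk]
  filter_upwards [h0] with t ht
  simpa using ht

end Aux

theorem stmt13 (g : ℕ → ℝ → ℝ)
    (hg : ∀ n, MemLp (g n) ⊤ (volume.restrict (Set.Icc (0:ℝ) 1))) :
    (∀ f : ℝ → ℝ, MemLp f 1 (volume.restrict (Set.Icc (0:ℝ) 1)) →
        Summable fun n => |∫ t, g n t * f t ∂(volume.restrict (Set.Icc (0:ℝ) 1))|) ↔
      ∃ (g' : ℕ → ℝ → ℝ) (C : ℝ),
        (∀ n, g n =ᵐ[volume.restrict (Set.Icc (0:ℝ) 1)] g' n) ∧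
        ∀ t : ℝ, Summable (fun n => |g' n t|) ∧ ∑' n, |g' n t| ≤ C := by
  classical
  set μ := volume.restrict (Set.Icc (0:ℝ) 1) with hμdef
  haveI : IsFiniteMeasure μ := by
    refine ⟨?_⟩
    rw [hμdef, Measure.restrict_apply_univ, Real.volume_Icc]
    exact ENNReal.ofReal_lt_top
  constructor
  · -- forward direction
    intro hsum
    -- choose bounded representatives
    have hrep : ∀ n, ∃ (h : ℝ → ℝ) (M : ℝ),
        AEStronglyMeasurable h μ ∧ (∀ t, |h t| ≤ M) ∧ g n =ᵐ[μ] h := by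
      intro n
      obtain ⟨M, hM⟩ : ∃ M : ℝ, ∀ᵐ t ∂μ, |g n t| ≤ M := by
        refine ⟨(eLpNorm (g n) ⊤ μ).toReal, ?_⟩
        filter_upwards [ae_le_eLpNormEssSup (f := g n) (μ := μ)] with t ht
        have hlt : eLpNormEssSup (g n) μ < ⊤ := by
          rw [← eLpNorm_exponent_top]; exact (hg n).2
        have : ((‖g n t‖₊ : ℝ≥0∞)).toReal ≤ (eLpNormEssSup (g n) μ).toReal :=
          ENNReal.toReal_mono hlt.ne ht
        simpa [eLpNorm_exponent_top, Real.norm_eq_abs] using this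
      refine ⟨fun t => if |g n t| ≤ M then g n t else 0, max M 0, ?_, ?_, ?_⟩
      · refine (hg n).aestronglyMeasurable.congr ?_
        filter_upwards [hM] with t ht
        simp [ht]
      · intro t
        by_cases ht : |g n t| ≤ M
        · simp only [if_pos ht]
          exact le_trans ht (le_max_left _ _)
        · simp [if_neg ht]
      · filter_upwards [hM] with t ht
        simp [ht]
    choose g₀ M hmeas hbd hae using hrep
    -- the family of sign-combinations
    set c : Finset ℕ → ℕ → ℝ := fun σ n => if n ∈ σ then 1 else -1 with hc
    have habs_c : ∀ σ n, |c σ n| = 1 := by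
      intro σ n
      by_cases h : n ∈ σ <;> simp [hc, h]
    set H : Finset ℕ × Finset ℕ → ℝ → ℝ :=
      fun i t => ∑ n ∈ i.1, c i.2 n * g₀ n t with hH
    have hmH : ∀ i, AEStronglyMeasurable (H i) μ := by
      intro i
      exact Finset.aestronglyMeasurable_fun_sum _ fun n _ => (hmeas n).const_mul _
    have hbH : ∀ i, ∀ t, |H i t| ≤ ∑ n ∈ i.1, M n := by
      intro i t
      refine le_trans (Finset.abs_sum_le_sum_abs _ _) (Finset.sum_le_sum fun n _ => ?_)
      rw [abs_mul, habs_c, one_mul]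
      exact hbd n t
    set T : Finset ℕ × Finset ℕ → (Lp ℝ 1 μ →L[ℝ] ℝ) :=
      fun i => pairCLM (H i) (hmH i) (∑ n ∈ i.1, M n) (hbH i) with hT
    -- pointwise boundedness
    have hptwise : ∀ x : Lp ℝ 1 μ, ∃ C, ∀ i, ‖T i x‖ ≤ C := by
      intro x
      have hx : Integrable (x : ℝ → ℝ) μ := L1.integrable_coeFn x
      have hintn : ∀ n, Integrable (fun t => g₀ n t * x t) μ :=
        fun n => hx.bdd_mul (hmeas n) (Eventually.of_forall fun t => by simpa using hbd n t)
      have hSummable : Summable fun n => |∫ t, g₀ n t * x t ∂μ| := by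
        have := hsum (x : ℝ → ℝ) (Lp.memLp x)
        refine this.congr fun n => ?_
        congr 1
        refine integral_congr_ae ?_
        filter_upwards [hae n] with t ht
        rw [ht]
      refine ⟨∑' n, |∫ t, g₀ n t * x t ∂μ|, fun i => ?_⟩
      have hTx : T i x = ∑ n ∈ i.1, c i.2 n * ∫ t, g₀ n t * x t ∂μ := by
        rw [hT]
        simp only [pairCLM_apply]
        have : (fun t => H i t * x t)
            = fun t => ∑ n ∈ i.1, c i.2 n * (g₀ n t * x t) := by
          funext t
          rw [hH]
          simp only
          rw [Finset.sum_mul]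
          exact Finset.sum_congr rfl fun n _ => by ring
        rw [this, integral_finset_sum _ fun n _ => (hintn n).const_mul _]
        exact Finset.sum_congr rfl fun n _ => integral_const_mul _ _
      rw [hTx]
      calc ‖∑ n ∈ i.1, c i.2 n * ∫ t, g₀ n t * x t ∂μ‖
          ≤ ∑ n ∈ i.1, |c i.2 n * ∫ t, g₀ n t * x t ∂μ| :=
            Finset.abs_sum_le_sum_abs _ _
        _ = ∑ n ∈ i.1, |∫ t, g₀ n t * x t ∂μ| := by
            refine Finset.sum_congr rfl fun n _ => ?_
            rw [abs_mul, habs_c, one_mul]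
        _ ≤ ∑' n, |∫ t, g₀ n t * x t ∂μ| :=
            Summable.sum_le_tsum _ (fun n _ => abs_nonneg _) hSummable
    obtain ⟨C, hC⟩ := banach_steinhaus hptwise
    have hC0 : 0 ≤ C := le_trans (norm_nonneg _) (hC (∅, ∅))
    -- a.e. bound for every sign combination
    have hAE : ∀ᵐ t ∂μ, ∀ i : Finset ℕ × Finset ℕ, H i t ≤ C :=
      ae_all_iff.mpr fun i => ae_le_of_opNorm_le (hC i)
    have hAE2 : ∀ᵐ t ∂μ, ∀ F : Finset ℕ, ∑ n ∈ F, |g₀ n t| ≤ C := by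
      filter_upwards [hAE] with t ht F
      have key := ht (F, F.filter fun n => 0 ≤ g₀ n t)
      have heq : H (F, F.filter fun n => 0 ≤ g₀ n t) t = ∑ n ∈ F, |g₀ n t| := by
        rw [hH]
        refine Finset.sum_congr rfl fun n hn => ?_
        by_cases h : 0 ≤ g₀ n t
        · rw [hc]
          simp only
          rw [if_pos (Finset.mem_filter.mpr ⟨hn, h⟩), one_mul, abs_of_nonneg h]
        · have hmem : n ∉ Finset.filter (fun n => 0 ≤ g₀ n t) F :=
            fun hcon => h (Finset.mem_filter.mp hcon).2
          rw [hc]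
          simp only
          rw [if_neg hmem, neg_one_mul, abs_of_neg (lt_of_not_ge h)]
      rw [heq] at key
      exact key
    set P : ℝ → Prop := fun t => ∀ F : Finset ℕ, ∑ n ∈ F, |g₀ n t| ≤ C with hP
    refine ⟨fun n t => if P t then g₀ n t else 0, C, ?_, ?_⟩
    · intro n
      filter_upwards [hae n, hAE2] with t h1 h2
      rw [if_pos h2, h1]
    · intro t
      by_cases hPt : P t
      · simp only [if_pos hPt]
        have hb : ∀ N, ∑ n ∈ Finset.range N, |g₀ n t| ≤ C := fun N => hPt _
        exact ⟨summable_of_sum_range_le (fun n => abs_nonneg _) hb,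
          Real.tsum_le_of_sum_range_le (fun n => abs_nonneg _) hb⟩
      · simp only [if_neg hPt, abs_zero]
        exact ⟨summable_zero, by simpa using hC0⟩
  · -- backward direction
    rintro ⟨g', C, hae, hbd⟩ f hf
    have hfi : Integrable f μ := memLp_one_iff_integrable.mp hf
    have hb' : ∀ n t, |g' n t| ≤ C := by
      intro n t
      exact le_trans (Summable.le_tsum (hbd t).1 n fun m _ => abs_nonneg _) (hbd t).2
    have hint : ∀ n, Integrable (fun t => g' n t * f t) μ := fun n =>
      hfi.bdd_mul ((hg n).aestronglyMeasurable.congr (hae n))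
        (Eventually.of_forall fun t => by simpa using hb' n t)
    have heq : ∀ n, ∫ t, g n t * f t ∂μ = ∫ t, g' n t * f t ∂μ := fun n =>
      integral_congr_ae (by filter_upwards [hae n] with t ht; rw [ht])
    refine summable_of_sum_range_le (c := C * ∫ t, |f t| ∂μ) (fun n => abs_nonneg _) fun N => ?_
    calc ∑ n ∈ Finset.range N, |∫ t, g n t * f t ∂μ|
        = ∑ n ∈ Finset.range N, |∫ t, g' n t * f t ∂μ| := by
          exact Finset.sum_congr rfl fun n _ => by rw [heq]
      _ ≤ ∑ n ∈ Finset.range N, ∫ t, |g' n t * f t| ∂μ :=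
          Finset.sum_le_sum fun n _ => by
            have := norm_integral_le_integral_norm (μ := μ) fun t => g' n t * f t
            simp only [Real.norm_eq_abs] at this
            exact this
      _ = ∫ t, ∑ n ∈ Finset.range N, |g' n t * f t| ∂μ :=
          (integral_finset_sum _ fun n _ => (hint n).abs).symm
      _ ≤ ∫ t, C * |f t| ∂μ := by
          refine integral_mono (integrable_finset_sum _ fun n _ => (hint n).abs)
            (hfi.abs.const_mul C) fun t => ?_
          have : ∑ n ∈ Finset.range N, |g' n t * f t|
              = (∑ n ∈ Finset.range N, |g' n t|) * |f t| := by
            rw [Finset.sum_mul]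
            exact Finset.sum_congr rfl fun n _ => abs_mul _ _
          rw [this]
          refine mul_le_mul_of_nonneg_right ?_ (abs_nonneg _)
          exact le_trans (Summable.sum_le_tsum _ (fun n _ => abs_nonneg _) (hbd t).1) (hbd t).2
      _ = C * ∫ t, |f t| ∂μ := integral_const_mul _ _
end

section
/- Let $1 < p < \infty$, $X$ a Banach space, and $(x_n^*)$ in $X^*$ with $w_p = \sup_{\|x\|\le 1}(\sum_n |x_n^*(x)|^p)^{1/p} < \infty$. Define $U : C([0,1], X) \to \ell_p$ by $U(f) = (\int_0^1 x_n^*(f(t))\, r_n(t)\,dt)_n$, where $(r_n)$ are the Rademacher functions. Then $U$ is well-defined and bounded, and for every $f \in C([0,1],X)$, $\|U(f)\|_{\ell_p} \le (\int_0^1 \|T(f(t))\|_{\ell_p}^p\,dt)^{1/p}$, where $T : X \to \ell_p$ is $T(x) = (x_n^*(x))_n$. Moreover, if $T$ is a Dunford–Pettis operator then $U$ is a Dunford–Pettis operator. -/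
open Filter Topology MeasureTheory

lemma abs_rademacher_le (k : ℕ) (t : ℝ) : |rademacher k t| ≤ 1 := by
  rcases Real.sign_apply_eq (Real.sin (2 ^ k * Real.pi * t)) with h | h | h <;>
    simp [rademacher, h]

lemma continuous_integrable {α : Type*} [TopologicalSpace α] [CompactSpace α]
    [MeasurableSpace α] [OpensMeasurableSpace α] {μ : Measure α} [IsFiniteMeasure μ]
    {g : α → ℝ} (hg : Continuous g) : Integrable g μ :=
  BoundedContinuousFunction.integrable μ (BoundedContinuousFunction.mkOfCompact ⟨g, hg⟩)

theorem stmt18 {X : Type*} [NormedAddCommGroup X] [NormedSpace ℝ X] [CompleteSpace X]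
    (p : ℝ) (hp1 : 1 < p)
    (x' : ℕ → X →L[ℝ] ℝ)
    (hsum : ∀ x : X, Summable fun n => |x' n x| ^ p)
    (w : ℝ) (hw : ∀ x : X, ‖x‖ ≤ 1 → (∑' n, |x' n x| ^ p) ^ (1 / p) ≤ w) :
    (∀ f : C(Set.Icc (0:ℝ) 1, X),
      Summable fun n => |∫ t, x' n (f t) * rademacher (n + 1) (t : ℝ)| ^ p) ∧
    (∀ f : C(Set.Icc (0:ℝ) 1, X),
      (∑' n, |∫ t, x' n (f t) * rademacher (n + 1) (t : ℝ)| ^ p) ^ (1 / p) ≤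
        (∫ t, ∑' n, |x' n (f t)| ^ p) ^ (1 / p)) ∧
    (∃ C : ℝ, ∀ f : C(Set.Icc (0:ℝ) 1, X),
      (∑' n, |∫ t, x' n (f t) * rademacher (n + 1) (t : ℝ)| ^ p) ^ (1 / p) ≤ C * ‖f‖) ∧
    ((∀ x : ℕ → X, (∀ ψ : X →L[ℝ] ℝ, Tendsto (fun m => ψ (x m)) atTop (𝓝 0)) →
        Tendsto (fun m => (∑' n, |x' n (x m)| ^ p) ^ (1 / p)) atTop (𝓝 0)) →
      ∀ f : ℕ → C(Set.Icc (0:ℝ) 1, X),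
        (∀ Φ : C(Set.Icc (0:ℝ) 1, X) →L[ℝ] ℝ, Tendsto (fun k => Φ (f k)) atTop (𝓝 0)) →
        Tendsto
          (fun k => (∑' n, |∫ t, x' n (f k t) * rademacher (n + 1) (t : ℝ)| ^ p) ^ (1 / p))
          atTop (𝓝 0)) := by
  have hp0 : (0:ℝ) < p := lt_trans one_pos hp1
  have hp0' : p ≠ 0 := ne_of_gt hp0
  have hpinv : (0:ℝ) < 1 / p := by positivity
  -- w ≥ 0
  have hw0 : 0 ≤ w := by
    have h := hw 0 (by simp)
    simpa [Real.zero_rpow hp0', one_div, Real.zero_rpow (inv_ne_zero hp0')] using h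
  -- scaling bound
  have hbound : ∀ x : X, (∑' n, |x' n x| ^ p) ≤ (w * ‖x‖) ^ p := by
    intro x
    rcases eq_or_ne x 0 with rfl | hx
    · simp [Real.zero_rpow hp0']
    · have hc : (0:ℝ) < ‖x‖ := norm_pos_iff.2 hx
      have hS0 : 0 ≤ ∑' n, |x' n x| ^ p :=
        tsum_nonneg fun n => Real.rpow_nonneg (abs_nonneg _) _
      have h1 : (∑' n, |x' n (‖x‖⁻¹ • x)| ^ p) = ‖x‖⁻¹ ^ p * ∑' n, |x' n x| ^ p := by
        rw [← tsum_mul_left]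
        congr 1; funext n
        rw [(x' n).map_smul, smul_eq_mul, abs_mul,
          Real.mul_rpow (abs_nonneg _) (abs_nonneg _),
          abs_of_nonneg (inv_nonneg.2 hc.le)]
      have hxu : ‖(‖x‖⁻¹ • x)‖ ≤ 1 := by
        rw [norm_smul, norm_inv, norm_norm, inv_mul_cancel₀ hc.ne']
      have h2 := hw _ hxu
      rw [h1] at h2
      have hinner : 0 ≤ ‖x‖⁻¹ ^ p * ∑' n, |x' n x| ^ p :=
        mul_nonneg (Real.rpow_nonneg (inv_nonneg.2 hc.le) _) hS0
      have h3 : ‖x‖⁻¹ ^ p * (∑' n, |x' n x| ^ p) ≤ w ^ p := by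
        have h4 := Real.rpow_le_rpow (Real.rpow_nonneg hinner _) h2 hp0.le
        rwa [← Real.rpow_mul hinner, one_div_mul_cancel hp0', Real.rpow_one] at h4
      calc (∑' n, |x' n x| ^ p)
          = ‖x‖ ^ p * (‖x‖⁻¹ ^ p * ∑' n, |x' n x| ^ p) := by
            rw [← mul_assoc, ← Real.mul_rpow hc.le (inv_nonneg.2 hc.le),
              mul_inv_cancel₀ hc.ne', Real.one_rpow, one_mul]
        _ ≤ ‖x‖ ^ p * w ^ p := by
            exact mul_le_mul_of_nonneg_left h3 (Real.rpow_nonneg hc.le _)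
        _ = (w * ‖x‖) ^ p := by
            rw [← Real.mul_rpow hc.le hw0, mul_comm]
  -- continuity / integrability of |x' n (f t)|^p
  have hφc : ∀ (f : C(Set.Icc (0:ℝ) 1, X)) (n : ℕ),
      Continuous fun t : Set.Icc (0:ℝ) 1 => |x' n (f t)| :=
    fun f n => ((x' n).continuous.comp f.continuous).abs
  have hφpc : ∀ (f : C(Set.Icc (0:ℝ) 1, X)) (n : ℕ),
      Continuous fun t : Set.Icc (0:ℝ) 1 => |x' n (f t)| ^ p :=
    fun f n => (Real.continuous_rpow_const hp0.le).comp (hφc f n)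
  have hInt : ∀ (f : C(Set.Icc (0:ℝ) 1, X)) (n : ℕ),
      Integrable (fun t : Set.Icc (0:ℝ) 1 => |x' n (f t)| ^ p) volume :=
    fun f n => continuous_integrable (hφpc f n)
  -- key pointwise inequality (Jensen/Hölder)
  have hkey : ∀ (f : C(Set.Icc (0:ℝ) 1, X)) (n : ℕ),
      |∫ t, x' n (f t) * rademacher (n + 1) (t : ℝ)| ^ p ≤
        ∫ t, |x' n (f t)| ^ p := by
    intro f n
    have hφint : Integrable (fun t : Set.Icc (0:ℝ) 1 => |x' n (f t)|) volume :=
      continuous_integrable (hφc f n)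
    have h1 : |∫ t, x' n (f t) * rademacher (n + 1) (t : ℝ)| ≤
        ∫ t, |x' n (f t)| := by
      rw [← Real.norm_eq_abs]
      refine le_trans (norm_integral_le_integral_norm _) ?_
      refine integral_mono_of_nonneg (Eventually.of_forall fun t => norm_nonneg _)
        hφint (Eventually.of_forall fun t => ?_)
      show ‖x' n (f t) * rademacher (n + 1) (t : ℝ)‖ ≤ |x' n (f t)|
      rw [Real.norm_eq_abs, abs_mul]
      exact mul_le_of_le_one_right (abs_nonneg _) (abs_rademacher_le _ _)
    have hpq : p.HolderConjugate p.conjExponent := Real.HolderConjugate.conjExponent hp1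
    have hmem1 : MemLp (fun t : Set.Icc (0:ℝ) 1 => |x' n (f t)|) (ENNReal.ofReal p)
        volume := by
      refine memLp_of_bounded (a := 0) (b := ‖x' n‖ * ‖f‖)
        (Eventually.of_forall fun t => ⟨abs_nonneg _, ?_⟩)
        (hφc f n).aestronglyMeasurable _
      calc |x' n (f t)| ≤ ‖x' n‖ * ‖f t‖ := (x' n).le_opNorm _
        _ ≤ ‖x' n‖ * ‖f‖ :=
          mul_le_mul_of_nonneg_left (f.norm_coe_le_norm t) (norm_nonneg _)
    have hmem2 : MemLp (fun _ : Set.Icc (0:ℝ) 1 => (1:ℝ))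
        (ENNReal.ofReal p.conjExponent) volume := memLp_const 1
    have h2 := integral_mul_le_Lp_mul_Lq_of_nonneg hpq
      (Eventually.of_forall fun t => abs_nonneg (x' n (f t)))
      (Eventually.of_forall fun _ => zero_le_one) hmem1 hmem2
    simp only [mul_one, Real.one_rpow, integral_const, measure_univ,
      ENNReal.toReal_one, one_smul, smul_eq_mul] at h2
    have h3 : |∫ t, x' n (f t) * rademacher (n + 1) (t : ℝ)| ≤
        (∫ t, |x' n (f t)| ^ p) ^ (1 / p) := by
      refine h1.trans ?_
      simpa using h2
    have hI0 : 0 ≤ ∫ t, |x' n (f t)| ^ p :=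
      integral_nonneg fun t => Real.rpow_nonneg (abs_nonneg _) _
    calc |∫ t, x' n (f t) * rademacher (n + 1) (t : ℝ)| ^ p
        ≤ ((∫ t, |x' n (f t)| ^ p) ^ (1 / p)) ^ p :=
          Real.rpow_le_rpow (abs_nonneg _) h3 hp0.le
      _ = ∫ t, |x' n (f t)| ^ p := by
          rw [← Real.rpow_mul hI0, one_div_mul_cancel hp0', Real.rpow_one]
  -- partial sums of integrals are uniformly bounded
  have hpartial : ∀ (f : C(Set.Icc (0:ℝ) 1, X)) (N : ℕ),
      ∑ n ∈ Finset.range N, ∫ t, |x' n (f t)| ^ p ≤ (w * ‖f‖) ^ p := by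
    intro f N
    rw [← integral_finset_sum _ (fun n _ => hInt f n)]
    have hconst : (∫ _t : Set.Icc (0:ℝ) 1, (w * ‖f‖) ^ p) = (w * ‖f‖) ^ p := by
      simp [measure_univ]
    rw [← hconst]
    refine integral_mono_of_nonneg
      (Eventually.of_forall fun t =>
        Finset.sum_nonneg fun n _ => Real.rpow_nonneg (abs_nonneg _) _)
      (integrable_const _) (Eventually.of_forall fun t => ?_)
    calc ∑ n ∈ Finset.range N, |x' n (f t)| ^ p
        ≤ ∑' n, |x' n (f t)| ^ p :=
          Summable.sum_le_tsum _ (fun n _ => Real.rpow_nonneg (abs_nonneg _) _) (hsum _)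
      _ ≤ (w * ‖f t‖) ^ p := hbound _
      _ ≤ (w * ‖f‖) ^ p := by
          refine Real.rpow_le_rpow (by positivity) ?_ hp0.le
          exact mul_le_mul_of_nonneg_left (f.norm_coe_le_norm t) hw0
  have hIntSummable : ∀ f : C(Set.Icc (0:ℝ) 1, X),
      Summable fun n => ∫ t, |x' n (f t)| ^ p := fun f =>
    summable_of_sum_range_le
      (fun n => integral_nonneg fun t => Real.rpow_nonneg (abs_nonneg _) _)
      (hpartial f)
  -- Part 1
  have part1 : ∀ f : C(Set.Icc (0:ℝ) 1, X),
      Summable fun n => |∫ t, x' n (f t) * rademacher (n + 1) (t : ℝ)| ^ p :=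
    fun f => Summable.of_nonneg_of_le (fun n => Real.rpow_nonneg (abs_nonneg _) _)
      (fun n => hkey f n) (hIntSummable f)
  -- measurability and integrability of the tsum
  have hSmeas : ∀ f : C(Set.Icc (0:ℝ) 1, X),
      AEStronglyMeasurable (fun t : Set.Icc (0:ℝ) 1 => ∑' n, |x' n (f t)| ^ p)
        volume := by
    intro f
    refine aestronglyMeasurable_of_tendsto_ae atTop
      (f := fun N (t : Set.Icc (0:ℝ) 1) => ∑ n ∈ Finset.range N, |x' n (f t)| ^ p)
      (fun N => Continuous.aestronglyMeasurable ?_)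
      (Eventually.of_forall fun t => (hsum (f t)).hasSum.tendsto_sum_nat)
    exact continuous_finset_sum _ fun n _ => hφpc f n
  have hSint : ∀ f : C(Set.Icc (0:ℝ) 1, X),
      Integrable (fun t : Set.Icc (0:ℝ) 1 => ∑' n, |x' n (f t)| ^ p) volume := by
    intro f
    refine memLp_one_iff_integrable.mp ?_
    refine memLp_of_bounded (a := 0) (b := (w * ‖f‖) ^ p)
      (Eventually.of_forall fun t => ⟨tsum_nonneg fun n => Real.rpow_nonneg (abs_nonneg _) _, ?_⟩)
      (hSmeas f) _
    calc (∑' n, |x' n (f t)| ^ p) ≤ (w * ‖f t‖) ^ p := hbound _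
      _ ≤ (w * ‖f‖) ^ p := by
        refine Real.rpow_le_rpow (by positivity) ?_ hp0.le
        exact mul_le_mul_of_nonneg_left (f.norm_coe_le_norm t) hw0
  -- core inequality: tsum ≤ integral of tsum
  have hcore : ∀ f : C(Set.Icc (0:ℝ) 1, X),
      (∑' n, |∫ t, x' n (f t) * rademacher (n + 1) (t : ℝ)| ^ p) ≤
        ∫ t, ∑' n, |x' n (f t)| ^ p := by
    intro f
    refine Summable.tsum_le_of_sum_range_le (part1 f) fun N => ?_
    calc ∑ n ∈ Finset.range N, |∫ t, x' n (f t) * rademacher (n + 1) (t : ℝ)| ^ p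
        ≤ ∑ n ∈ Finset.range N, ∫ t, |x' n (f t)| ^ p :=
          Finset.sum_le_sum fun n _ => hkey f n
      _ = ∫ t, ∑ n ∈ Finset.range N, |x' n (f t)| ^ p :=
          (integral_finset_sum _ (fun n _ => hInt f n)).symm
      _ ≤ ∫ t, ∑' n, |x' n (f t)| ^ p := by
          refine integral_mono_of_nonneg
            (Eventually.of_forall fun t =>
              Finset.sum_nonneg fun n _ => Real.rpow_nonneg (abs_nonneg _) _)
            (hSint f) (Eventually.of_forall fun t => ?_)
          exact Summable.sum_le_tsum _ (fun n _ => Real.rpow_nonneg (abs_nonneg _) _) (hsum _)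
  -- Part 2
  have part2 : ∀ f : C(Set.Icc (0:ℝ) 1, X),
      (∑' n, |∫ t, x' n (f t) * rademacher (n + 1) (t : ℝ)| ^ p) ^ (1 / p) ≤
        (∫ t, ∑' n, |x' n (f t)| ^ p) ^ (1 / p) := fun f =>
    Real.rpow_le_rpow (tsum_nonneg fun n => Real.rpow_nonneg (abs_nonneg _) _)
      (hcore f) hpinv.le
  -- integral of the tsum is at most (w ‖f‖)^p
  have hIntS_le : ∀ f : C(Set.Icc (0:ℝ) 1, X),
      ∫ t, ∑' n, |x' n (f t)| ^ p ≤ (w * ‖f‖) ^ p := by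
    intro f
    have : (∫ t, ∑' n, |x' n (f t)| ^ p) ≤
        ∫ _t : Set.Icc (0:ℝ) 1, (w * ‖f‖) ^ p := by
      refine integral_mono_of_nonneg
        (Eventually.of_forall fun t =>
          tsum_nonneg fun n => Real.rpow_nonneg (abs_nonneg _) _)
        (integrable_const _) (Eventually.of_forall fun t => ?_)
      calc (∑' n, |x' n (f t)| ^ p) ≤ (w * ‖f t‖) ^ p := hbound _
        _ ≤ (w * ‖f‖) ^ p := by
          refine Real.rpow_le_rpow (by positivity) ?_ hp0.le
          exact mul_le_mul_of_nonneg_left (f.norm_coe_le_norm t) hw0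
    simpa [measure_univ] using this
  -- Part 3
  have part3 : ∀ f : C(Set.Icc (0:ℝ) 1, X),
      (∑' n, |∫ t, x' n (f t) * rademacher (n + 1) (t : ℝ)| ^ p) ^ (1 / p) ≤
        w * ‖f‖ := by
    intro f
    refine (part2 f).trans ?_
    have h0 : 0 ≤ ∫ t, ∑' n, |x' n (f t)| ^ p :=
      integral_nonneg fun t => tsum_nonneg fun n => Real.rpow_nonneg (abs_nonneg _) _
    calc (∫ t, ∑' n, |x' n (f t)| ^ p) ^ (1 / p)
        ≤ ((w * ‖f‖) ^ p) ^ (1 / p) :=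
          Real.rpow_le_rpow h0 (hIntS_le f) hpinv.le
      _ = w * ‖f‖ := by
          rw [← Real.rpow_mul (by positivity), mul_one_div_cancel hp0', Real.rpow_one]
  refine ⟨part1, part2, ⟨w, part3⟩, ?_⟩
  -- Part 4: Dunford–Pettis
  intro hT f hweak
  -- uniform bound on ‖f k‖
  obtain ⟨M, hM⟩ : ∃ M : ℝ, ∀ k, ‖f k‖ ≤ M := by
    have hBS : ∃ C', ∀ k,
        ‖(NormedSpace.inclusionInDoubleDualLi ℝ
          (E := C(Set.Icc (0:ℝ) 1, X))) (f k)‖ ≤ C' := by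
      apply banach_steinhaus
      intro Φ
      have h := (hweak Φ).norm
      rw [norm_zero] at h
      obtain ⟨C, hC⟩ := h.bddAbove_range
      exact ⟨C, fun k => hC (Set.mem_range_self k)⟩
    obtain ⟨C, hC⟩ := hBS
    refine ⟨C, fun k => ?_⟩
    rw [← (NormedSpace.inclusionInDoubleDualLi ℝ
      (E := C(Set.Icc (0:ℝ) 1, X))).norm_map (f k)]
    exact hC k
  have hM0 : ∀ k, 0 ≤ ‖f k‖ := fun k => norm_nonneg _
  -- pointwise convergence of the tsums
  have hpt : ∀ t : Set.Icc (0:ℝ) 1,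
      Tendsto (fun k => ∑' n, |x' n (f k t)| ^ p) atTop (𝓝 0) := by
    intro t
    have hweak_t : ∀ ψ : X →L[ℝ] ℝ,
        Tendsto (fun k => ψ (f k t)) atTop (𝓝 0) := by
      intro ψ
      exact hweak (ψ.comp (ContinuousMap.evalCLM ℝ t))
    have h1 := hT (fun k => f k t) hweak_t
    have h2 : Tendsto
        (fun k => ((∑' n, |x' n (f k t)| ^ p) ^ (1 / p)) ^ p) atTop (𝓝 ((0:ℝ) ^ p)) :=
      ((Real.continuous_rpow_const hp0.le).tendsto 0).comp h1
    rw [Real.zero_rpow hp0'] at h2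
    refine h2.congr fun k => ?_
    rw [← Real.rpow_mul
      (tsum_nonneg fun n => Real.rpow_nonneg (abs_nonneg _) _),
      one_div_mul_cancel hp0', Real.rpow_one]
  -- dominated convergence
  have hDCT : Tendsto (fun k => ∫ t, ∑' n, |x' n (f k t)| ^ p) atTop (𝓝 0) := by
    have h := tendsto_integral_of_dominated_convergence
      (F := fun k (t : Set.Icc (0:ℝ) 1) => ∑' n, |x' n (f k t)| ^ p)
      (f := fun _ => (0:ℝ)) (bound := fun _ => (w * M) ^ p)
      (fun k => hSmeas (f k)) (integrable_const _)
      (fun k => Eventually.of_forall fun t => ?_)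
      (Eventually.of_forall fun t => hpt t)
    · simpa using h
    · have hnn : 0 ≤ ∑' n, |x' n (f k t)| ^ p :=
        tsum_nonneg fun n => Real.rpow_nonneg (abs_nonneg _) _
      rw [Real.norm_of_nonneg hnn]
      calc (∑' n, |x' n (f k t)| ^ p) ≤ (w * ‖f k t‖) ^ p := hbound _
        _ ≤ (w * M) ^ p := by
          refine Real.rpow_le_rpow (by positivity) ?_ hp0.le
          refine mul_le_mul_of_nonneg_left ?_ hw0
          exact ((f k).norm_coe_le_norm t).trans (hM k)
  -- squeeze and take the 1/p-th power
  have hA : Tendsto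
      (fun k => ∑' n, |∫ t, x' n (f k t) * rademacher (n + 1) (t : ℝ)| ^ p)
      atTop (𝓝 0) := by
    refine squeeze_zero (fun k => tsum_nonneg fun n => Real.rpow_nonneg (abs_nonneg _) _)
      (fun k => hcore (f k)) hDCT
  have h2 : Tendsto
      (fun k => (∑' n, |∫ t, x' n (f k t) * rademacher (n + 1) (t : ℝ)| ^ p) ^ (1 / p))
      atTop (𝓝 ((0:ℝ) ^ (1 / p))) :=
    ((Real.continuous_rpow_const hpinv.le).tendsto 0).comp hA
  rwa [Real.zero_rpow (ne_of_gt hpinv)] at h2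
end
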